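/- arXiv:2310.02537 — 9 statements merged into one kernel-verified Lean document; each statement's English description precedes it below -/
import Mathlib

section
/- Let i_max < j_max be positive integers, let a_{ij} > 0 and b_{ij} > 0 for all i ∈ {1,…,i_max}, j ∈ {1,…,j_max}, and let c₁ > 0, c₂ > 0. Define f(w) = min_{1≤i≤i_max} (Σ_{j=1}^{j_max} w_j a_{ij} + c₁)/(Σ_{j=1}^{j_max} w_j b_{ij} + c₂) for w in the probability simplex Δ_{j_max}. Then there exists w* ∈ Δ_{j_max} attaining the maximum of f over Δ_{j_max} such that at most i_max of the coordinates w*_j are nonzero (equivalently, w* has at least j_max − i_max zero coordinates). -/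
/-!
Let `t` be the maximum of `f` on the simplex; it is attained because `f` is a minimum of
continuous functions, hence upper semicontinuous. As the denominators are positive, `t ≤ f w` is
the system of linear inequalities `∑ⱼ (a i j - t b i j) w j ≥ t c₂ - c₁`, so every point of the
polyhedron these cut out of the simplex is a maximizer. If a point of this polyhedron has more
than `i_max` nonzero coordinates, a dimension count gives a nonzero direction `d` supported on them
with `∑ⱼ d j = 0` along which all the left-hand sides are nondecreasing; moving along `d` until a
coordinate vanishes stays in the polyhedron and shrinks the support.
-/

open Finset Module Matrix

section OrderedField

variable {𝕜 V W ι κ : Type*} [Field 𝕜] [LinearOrder 𝕜] [IsStrictOrderedRing 𝕜]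
  [AddCommGroup V] [Module 𝕜 V] [FiniteDimensional 𝕜 V] [Fintype ι] [Fintype κ] [Nonempty κ]

theorem LinearMap.exists_ne_zero_nonneg_of_card_le_finrank (G : V →ₗ[𝕜] κ → 𝕜)
    (h : Fintype.card κ ≤ finrank 𝕜 V) : ∃ v, v ≠ 0 ∧ 0 ≤ G v := by
  by_cases hG : Function.Injective G
  · have hrank : finrank 𝕜 V = finrank 𝕜 (κ → 𝕜) := by
      have := LinearMap.finrank_le_finrank_of_injective hG
      rw [finrank_fintype_fun_eq_card] at this ⊢
      omega
    obtain ⟨v, hv⟩ := (LinearMap.injective_iff_surjective_of_finrank_eq_finrank hrank).1 hG 1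
    refine ⟨v, ?_, hv ▸ zero_le_one⟩
    rintro rfl
    simp at hv
  · obtain ⟨v, hGv, hv⟩ : ∃ v, G v = 0 ∧ v ≠ 0 := by
      simpa [injective_iff_map_eq_zero] using hG
    exact ⟨v, hv, hGv.ge⟩

theorem LinearMap.exists_ne_zero_mem_ker_nonneg [AddCommGroup W] [Module 𝕜 W]
    [FiniteDimensional 𝕜 W] (Φ : V →ₗ[𝕜] W) (G : V →ₗ[𝕜] κ → 𝕜)
    (h : finrank 𝕜 W + Fintype.card κ ≤ finrank 𝕜 V) : ∃ v, v ≠ 0 ∧ Φ v = 0 ∧ 0 ≤ G v := by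
  have hker : Fintype.card κ ≤ finrank 𝕜 (LinearMap.ker Φ) := by
    have := Φ.finrank_range_add_finrank_ker
    have := Submodule.finrank_le (LinearMap.range Φ)
    omega
  obtain ⟨⟨v, hv⟩, hne, hGv⟩ :=
    (G.comp (LinearMap.ker Φ).subtype).exists_ne_zero_nonneg_of_card_le_finrank hker
  exact ⟨v, by simpa using hne, hv, hGv⟩

theorem Matrix.exists_sum_eq_zero_nonneg_mulVec (g : Matrix κ ι 𝕜) (S : Finset ι)
    (hS : Fintype.card κ < #S) :
    ∃ d : ι → 𝕜, d ≠ 0 ∧ (∀ j ∉ S, d j = 0) ∧ ∑ j, d j = 0 ∧ 0 ≤ g *ᵥ d := by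
  classical
  let Φ : (ι → 𝕜) →ₗ[𝕜] ({j // j ∉ S} → 𝕜) × 𝕜 :=
    (LinearMap.funLeft 𝕜 𝕜 Subtype.val).prod (∑ j, LinearMap.proj j)
  have hrank : finrank 𝕜 (({j // j ∉ S} → 𝕜) × 𝕜) + Fintype.card κ ≤ finrank 𝕜 (ι → 𝕜) := by
    simp only [finrank_prod, finrank_fintype_fun_eq_card, Fintype.card_subtype_compl,
      Fintype.card_coe, finrank_self]
    have := S.card_le_univ
    omega
  obtain ⟨d, hd, hΦd, hgd⟩ := Φ.exists_ne_zero_mem_ker_nonneg g.mulVecLin hrank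
  simp only [Φ, LinearMap.prod_apply, LinearMap.coe_sum, LinearMap.coe_proj, Function.prod_apply,
    Finset.sum_apply, Function.eval, Prod.ext_iff, Prod.fst_zero, funext_iff, LinearMap.funLeft_apply,
    Pi.zero_apply, Subtype.forall, Prod.snd_zero] at hΦd
  exact ⟨d, hd, hΦd.1, hΦd.2, hgd⟩

theorem exists_nonneg_add_smul_card_support_lt {w d : ι → 𝕜} (hw : 0 ≤ w)
    (hd : ∀ j, w j = 0 → d j = 0) (hneg : ∃ j, d j < 0) :
    ∃ ε : 𝕜, 0 ≤ ε ∧ 0 ≤ w + ε • d ∧ #{j | (w + ε • d) j ≠ 0} < #{j | w j ≠ 0} := by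
  obtain ⟨j₀, hj₀, hmin⟩ := (univ.filter fun j => d j < 0).exists_min_image
    (fun j => w j / -d j) (by simpa [Finset.Nonempty] using hneg)
  rw [mem_filter] at hj₀
  have hw₀ : w j₀ ≠ 0 := fun h => hj₀.2.ne (hd j₀ h)
  refine ⟨w j₀ / -d j₀, div_nonneg (hw j₀) (neg_nonneg.2 hj₀.2.le), fun j => ?_, ?_⟩
  · rcases le_or_gt 0 (d j) with hdj | hdj
    · exact add_nonneg (hw j) (mul_nonneg (div_nonneg (hw j₀) (neg_nonneg.2 hj₀.2.le)) hdj)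
    · have := (le_div_iff₀ (neg_pos.2 hdj)).1 (hmin j (by simpa using hdj))
      simp only [Pi.add_apply, Pi.smul_apply, smul_eq_mul, Pi.zero_apply]
      linarith
  · refine card_lt_card ((ssubset_iff_of_subset fun j => ?_).2 ⟨j₀, ?_, ?_⟩)
    · simp only [mem_filter, mem_univ, true_and, Pi.add_apply, Pi.smul_apply, smul_eq_mul]
      exact mt fun h => by simp [h, hd j h]
    · simpa using hw₀
    · have : d j₀ ≠ 0 := hj₀.2.ne
      simp only [mem_filter, mem_univ, true_and, not_not, Pi.add_apply, Pi.smul_apply, smul_eq_mul]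
      field_simp
      ring

theorem exists_mem_stdSimplex_le_mulVec_card_support_lt (g : Matrix κ ι 𝕜) (r : κ → 𝕜)
    {w : ι → 𝕜} (hw : w ∈ stdSimplex 𝕜 ι) (hr : r ≤ g *ᵥ w)
    (hcard : Fintype.card κ < #{j | w j ≠ 0}) :
    ∃ w' ∈ stdSimplex 𝕜 ι, r ≤ g *ᵥ w' ∧ #{j | w' j ≠ 0} < #{j | w j ≠ 0} := by
  obtain ⟨d, hd0, hdS, hdsum, hgd⟩ := g.exists_sum_eq_zero_nonneg_mulVec _ hcard
  have hneg : ∃ j, d j < 0 := by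
    by_contra! hnonneg
    exact hd0 <| funext fun j =>
      (sum_eq_zero_iff_of_nonneg fun j _ => hnonneg j).1 hdsum j (mem_univ j)
  obtain ⟨ε, hε, hnonneg, hlt⟩ :=
    exists_nonneg_add_smul_card_support_lt hw.1 (fun j hj => hdS j (by simp [hj])) hneg
  refine ⟨w + ε • d, ⟨hnonneg, ?_⟩, ?_, hlt⟩
  · simp [sum_add_distrib, ← mul_sum, hdsum, hw.2]
  · rw [mulVec_add, mulVec_smul]
    exact le_add_of_le_of_nonneg hr (smul_nonneg hε hgd)

theorem exists_mem_stdSimplex_le_mulVec_card_support_le (g : Matrix κ ι 𝕜) (r : κ → 𝕜)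
    {w : ι → 𝕜} (hw : w ∈ stdSimplex 𝕜 ι) (hr : r ≤ g *ᵥ w) :
    ∃ w' ∈ stdSimplex 𝕜 ι, r ≤ g *ᵥ w' ∧ #{j | w' j ≠ 0} ≤ Fintype.card κ := by
  induction hn : #{j | w j ≠ 0} using Nat.strong_induction_on generalizing w with
  | _ n ih =>
    by_cases hcard : n ≤ Fintype.card κ
    · exact ⟨w, hw, hr, hn ▸ hcard⟩
    · obtain ⟨w', hw', hr', hlt⟩ :=
        exists_mem_stdSimplex_le_mulVec_card_support_lt g r hw hr (hn ▸ not_le.1 hcard)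
      exact ih _ (hn ▸ hlt) hw' hr' rfl

theorem le_sum_add_div_sum_add_iff {w a b : ι → 𝕜} {c₁ c₂ t : 𝕜}
    (hden : 0 < ∑ j, w j * b j + c₂) :
    t ≤ (∑ j, w j * a j + c₁) / (∑ j, w j * b j + c₂) ↔
      t * c₂ - c₁ ≤ ∑ j, (a j - t * b j) * w j := by
  have hsum : ∑ j, (a j - t * b j) * w j = ∑ j, w j * a j - t * ∑ j, w j * b j := by
    rw [mul_sum, ← sum_sub_distrib]
    exact sum_congr rfl fun j _ => by ring
  rw [le_div_iff₀ hden, hsum]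
  constructor <;> intro <;> linarith

end OrderedField

theorem stmt0_general (imax jmax : ℕ) (h0 : 0 < imax) (hij : imax < jmax)
    (a b : Fin imax → Fin jmax → ℝ)
    (hb : ∀ i j, 0 < b i j)
    (c1 c2 : ℝ) (hc2 : 0 < c2) :
    ∃ w : Fin jmax → ℝ, (∀ j, 0 ≤ w j) ∧ (∑ j, w j = 1) ∧
      (Finset.univ.filter fun j => w j ≠ 0).card ≤ imax ∧
      ∀ v : Fin jmax → ℝ, (∀ j, 0 ≤ v j) → (∑ j, v j = 1) →
        (⨅ i : Fin imax, (∑ j, v j * a i j + c1) / (∑ j, v j * b i j + c2)) ≤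
          ⨅ i : Fin imax, (∑ j, w j * a i j + c1) / (∑ j, w j * b i j + c2) := by
  have : Nonempty (Fin imax) := ⟨⟨0, h0⟩⟩
  let f (v : Fin jmax → ℝ) := ⨅ i, (∑ j, v j * a i j + c1) / (∑ j, v j * b i j + c2)
  have hden : ∀ v ∈ stdSimplex ℝ (Fin jmax), ∀ i, 0 < ∑ j, v j * b i j + c2 := fun v hv i =>
    add_pos_of_nonneg_of_pos (sum_nonneg fun j _ => mul_nonneg (hv.1 j) (hb i j).le) hc2
  have hf : UpperSemicontinuousOn f (stdSimplex ℝ (Fin jmax)) :=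
    upperSemicontinuousOn_ciInf (fun _ _ => (Set.finite_range _).bddBelow) fun i =>
      (ContinuousOn.div (by fun_prop) (by fun_prop) fun v hv => (hden v hv i).ne')
        |>.upperSemicontinuousOn
  obtain ⟨w₀, hw₀, hmax⟩ := hf.exists_isMaxOn ⟨_, single_mem_stdSimplex ℝ ⟨0, h0.trans hij⟩⟩
    (isCompact_stdSimplex _ _)
  have hsuper : ∀ v ∈ stdSimplex ℝ (Fin jmax), f w₀ ≤ f v ↔
      (fun _ => f w₀ * c2 - c1) ≤ of (fun i j => a i j - f w₀ * b i j) *ᵥ v := fun v hv => by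
    rw [le_ciInf_iff (Set.finite_range _).bddBelow]
    exact forall_congr' fun i => le_sum_add_div_sum_add_iff (hden v hv i)
  obtain ⟨w, hw, hwr, hcard⟩ :=
    exists_mem_stdSimplex_le_mulVec_card_support_le _ _ hw₀ ((hsuper w₀ hw₀).1 le_rfl)
  exact ⟨w, hw.1, hw.2, by simpa using hcard,
    fun v hv hv1 => (hmax ⟨hv, hv1⟩).trans ((hsuper w hw).2 hwr)⟩

/-- Linear fractional program over the probability simplex with
positive coefficients `a`, `b` and positive constants `c₁`, `c₂`: there is a
maximizer of `w ↦ min_i (∑ j, w j * a i j + c₁)/(∑ j, w j * b i j + c₂)` whose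
support has at most `imax` elements. -/
theorem stmt0 (imax jmax : ℕ) (h0 : 0 < imax) (hij : imax < jmax)
    (a b : Fin imax → Fin jmax → ℝ)
    (ha : ∀ i j, 0 < a i j) (hb : ∀ i j, 0 < b i j)
    (c1 c2 : ℝ) (hc1 : 0 < c1) (hc2 : 0 < c2) :
    ∃ w : Fin jmax → ℝ, (∀ j, 0 ≤ w j) ∧ (∑ j, w j = 1) ∧
      (Finset.univ.filter fun j => w j ≠ 0).card ≤ imax ∧
      ∀ v : Fin jmax → ℝ, (∀ j, 0 ≤ v j) → (∑ j, v j = 1) →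
        (⨅ i : Fin imax, (∑ j, v j * a i j + c1) / (∑ j, v j * b i j + c2)) ≤
          ⨅ i : Fin imax, (∑ j, w j * a i j + c1) / (∑ j, w j * b i j + c2) :=
  stmt0_general imax jmax h0 hij a b hb c1 c2 hc2
end

section
/- Let i_max < j_max be positive integers, let a_{ij} ≥ 0 and b_{ij} > 0 for all i ∈ {1,…,i_max}, j ∈ {1,…,j_max}. Define f(w) = min_{1≤i≤i_max} (Σ_{j=1}^{j_max} w_j a_{ij})/(Σ_{j=1}^{j_max} w_j b_{ij}) for w in the probability simplex Δ_{j_max}. Then there exists w* ∈ Δ_{j_max} attaining the maximum of f over Δ_{j_max} such that at most i_max of the coordinates w*_j are nonzero. -/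
/-!
Let `w₀` maximize `f` on the simplex (it is continuous there because the denominators are
positive) and put `λ = f w₀`. For a point `w` of the simplex, `λ ≤ f w` iff
`∑ j, w j * (a i j - λ * b i j) ≥ 0` for every `i`, and this condition is invariant under positive
scaling. So it suffices to find a nonzero `w ≥ 0` with at most `imax` nonzero coordinates in the
cone `{w ≥ 0 | wᵀ (a - λ b) ≥ 0}`, which contains `w₀`.

The support of a point `w` of the cone with more than `imax` nonzero coordinates can be shrunk:
fix `j₀` with `w j₀ ≠ 0` and a constraint `i₀`. There are only `imax` linear conditions in
"`d` is supported on the support of `w`, `d j₀ = 0`, and `d` is orthogonal to every constraint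
except `i₀`", so some `d ≠ 0` satisfies them, with the sign chosen so that `d` is in the cone. If
`d ≥ 0`, then `d` itself is a smaller witness; otherwise follow `w + t d` until a coordinate
vanishes, which stays in the cone and is nonzero at `j₀`.
-/

open Finset Matrix

section SupportReduction

variable {ι κ : Type*} [Fintype ι] [Fintype κ]

lemma exists_add_smul_nonneg_eq_zero {w : κ → ℝ} (hw : 0 ≤ w) {d : κ → ℝ} (hd : ∃ j, d j < 0) :
    ∃ t : ℝ, 0 ≤ t ∧ 0 ≤ w + t • d ∧ ∃ j, d j < 0 ∧ w j + t * d j = 0 := by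
  classical
  obtain ⟨j₀, hj₀, hmin⟩ := exists_min_image {j | d j < 0} (fun j => w j / -d j)
    (by simpa [Finset.Nonempty] using hd)
  simp only [mem_filter, mem_univ, true_and] at hj₀ hmin
  have hneg : 0 < -d j₀ := neg_pos.2 hj₀
  refine ⟨w j₀ / -d j₀, div_nonneg (hw j₀) hneg.le, fun j => ?_, j₀, hj₀, ?_⟩
  · rcases le_or_gt 0 (d j) with hj | hj
    · exact add_nonneg (hw j) (mul_nonneg (div_nonneg (hw j₀) hneg.le) hj)
    · have := (le_div_iff₀ (neg_pos.2 hj)).1 (hmin j hj)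
      simp only [Pi.zero_apply, Pi.add_apply, Pi.smul_apply, smul_eq_mul]
      linarith
  · field_simp [hj₀.ne]
    ring

lemma exists_ne_zero_vecMul_eq_zero (M : Matrix κ ι ℝ) (S : Finset κ)
    (hS : Fintype.card ι < #S) :
    ∃ d : κ → ℝ, d ≠ 0 ∧ (∀ j, d j ≠ 0 → j ∈ S) ∧ d ᵥ* M = 0 := by
  have hdep : ¬ LinearIndepOn ℝ (fun j => M j : κ → ι → ℝ) S := fun h => by
    have := h.fintype_card_le_finrank
    simp only [coe_sort_coe, Fintype.card_coe, Module.finrank_fintype_fun_eq_card] at this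
    omega
  rw [linearIndepOn_iff] at hdep
  push Not at hdep
  obtain ⟨l, hlS, hl, hl0⟩ := hdep
  refine ⟨l, fun h => hl0 (Finsupp.ext (congrFun h)), fun j hj => hlS (by simpa using hj), ?_⟩
  rwa [Finsupp.linearCombination_apply, Finsupp.sum_fintype _ _ (by simp), ← vecMul_eq_sum] at hl

lemma exists_vecMul_nonneg_of_card_lt [Nonempty ι] (M : Matrix κ ι ℝ) (S : Finset κ)
    (hS : Fintype.card ι < #S) (j₀ : κ) :
    ∃ d : κ → ℝ, d ≠ 0 ∧ (∀ j, d j ≠ 0 → j ∈ S) ∧ d j₀ = 0 ∧ 0 ≤ d ᵥ* M := by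
  classical
  let i₀ := Classical.arbitrary ι
  -- Replacing column `i₀` by the indicator of `j₀` packs `d j₀ = 0` and `(d ᵥ* M) i = 0` for
  -- `i ≠ i₀` into one homogeneous system with `card ι` equations.
  obtain ⟨d, hd0, hdS, hdM⟩ := exists_ne_zero_vecMul_eq_zero (M.updateCol i₀ (Pi.single j₀ 1)) S hS
  rw [vecMul_updateCol, Function.update_eq_iff, dotProduct_single, mul_one] at hdM
  obtain ⟨hdj₀, hdM⟩ := hdM
  rcases le_total 0 ((d ᵥ* M) i₀) with h | h
  · refine ⟨d, hd0, hdS, hdj₀, fun i => ?_⟩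
    obtain rfl | hi := eq_or_ne i i₀
    exacts [h, (hdM i hi).ge]
  · refine ⟨-d, neg_ne_zero.2 hd0, by simpa using hdS, by simpa using hdj₀, fun i => ?_⟩
    rw [neg_vecMul]
    obtain rfl | hi := eq_or_ne i i₀
    exacts [neg_nonneg.2 h, by simp [hdM i hi]]

lemma card_filter_ne_zero_lt {w w' : κ → ℝ} (hsub : ∀ j, w' j ≠ 0 → w j ≠ 0) {j₀ : κ}
    (hw : w j₀ ≠ 0) (hw' : w' j₀ = 0) : #{j | w' j ≠ 0} < #{j | w j ≠ 0} :=
  card_lt_card <| (ssubset_iff_of_subset fun j => by simpa using hsub j).2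
    ⟨j₀, by simpa using hw, by simpa using hw'⟩

lemma exists_card_filter_ne_zero_lt [Nonempty ι] (M : Matrix κ ι ℝ) {w : κ → ℝ} (hw : 0 ≤ w)
    (hwM : 0 ≤ w ᵥ* M) (hcard : Fintype.card ι < #{j | w j ≠ 0}) :
    ∃ w' : κ → ℝ, 0 ≤ w' ∧ w' ≠ 0 ∧ 0 ≤ w' ᵥ* M ∧ #{j | w' j ≠ 0} < #{j | w j ≠ 0} := by
  obtain ⟨j₀, hj₀⟩ : ∃ j₀, w j₀ ≠ 0 := by
    by_contra! h
    simp [h] at hcard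
  obtain ⟨d, hd0, hdS, hdj₀, hdM⟩ := exists_vecMul_nonneg_of_card_lt M _ hcard j₀
  replace hdS : ∀ j, d j ≠ 0 → w j ≠ 0 := by simpa using hdS
  by_cases hneg : ∃ j, d j < 0
  · obtain ⟨t, ht, hwt, j₁, hj₁, hwtj₁⟩ := exists_add_smul_nonneg_eq_zero hw hneg
    refine ⟨w + t • d, hwt, fun h => hj₀ ?_, ?_,
      card_filter_ne_zero_lt (fun j hj => ?_) (hdS j₁ hj₁.ne) (by simpa using hwtj₁)⟩
    · simpa [hdj₀] using congrFun h j₀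
    · rw [add_vecMul, smul_vecMul]
      exact add_nonneg hwM (smul_nonneg ht hdM)
    · intro hwj
      have hdj : d j = 0 := by_contra fun h => hdS j h hwj
      simp [hwj, hdj] at hj
  · push Not at hneg
    exact ⟨d, hneg, hd0, hdM, card_filter_ne_zero_lt hdS hj₀ hdj₀⟩

theorem exists_card_filter_ne_zero_le [Nonempty ι] (M : Matrix κ ι ℝ) {w : κ → ℝ} (hw : 0 ≤ w)
    (hw0 : w ≠ 0) (hwM : 0 ≤ w ᵥ* M) :
    ∃ w' : κ → ℝ, 0 ≤ w' ∧ w' ≠ 0 ∧ 0 ≤ w' ᵥ* M ∧ #{j | w' j ≠ 0} ≤ Fintype.card ι := by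
  induction hn : #{j | w j ≠ 0} using Nat.strong_induction_on generalizing w with
  | _ n ih =>
  by_cases hcard : n ≤ Fintype.card ι
  · exact ⟨w, hw, hw0, hwM, hn ▸ hcard⟩
  · obtain ⟨w', hw', hw'0, hw'M, hlt⟩ :=
      exists_card_filter_ne_zero_lt M hw hwM (hn ▸ not_le.1 hcard)
    exact ih _ (hn ▸ hlt) hw' hw'0 hw'M rfl

end SupportReduction

section FractionalProgram

variable {ι κ : Type*} [Fintype ι] [Fintype κ] (a b : ι → κ → ℝ)

noncomputable def minRatio (v : κ → ℝ) : ℝ := ⨅ i, (∑ j, v j * a i j) / ∑ j, v j * b i j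

def gapMatrix (r : ℝ) : Matrix κ ι ℝ := Matrix.of fun j i => a i j - r * b i j

lemma sum_mul_pos_of_mem_stdSimplex {v : κ → ℝ} (hv : v ∈ stdSimplex ℝ κ) {c : κ → ℝ}
    (hc : ∀ j, 0 < c j) : 0 < ∑ j, v j * c j := by
  obtain ⟨j, -, hj⟩ := exists_lt_of_sum_lt (s := univ) (f := 0) (g := v) (by simp [hv.2])
  exact sum_pos' (fun j _ => mul_nonneg (hv.1 j) (hc j).le) ⟨j, mem_univ j, mul_pos hj (hc j)⟩

lemma le_minRatio_iff [Nonempty ι] {v : κ → ℝ} (hv : ∀ i, 0 < ∑ j, v j * b i j) (r : ℝ) :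
    r ≤ minRatio a b v ↔ 0 ≤ v ᵥ* gapMatrix a b r := by
  rw [minRatio, le_ciInf_iff (Set.finite_range _).bddBelow, Pi.le_def]
  refine forall_congr' fun i => ?_
  simp only [le_div_iff₀ (hv i), vecMul, dotProduct, gapMatrix, of_apply, mul_sub, sum_sub_distrib,
    Pi.zero_apply, sub_nonneg, mul_left_comm _ r, ← mul_sum]

lemma continuousOn_minRatio [Nonempty ι] (hb : ∀ i j, 0 < b i j) :
    ContinuousOn (minRatio a b) (stdSimplex ℝ κ) := by
  have hcont : ContinuousOn (fun v => univ.inf' univ_nonempty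
      fun i => (∑ j, v j * a i j) / ∑ j, v j * b i j) (stdSimplex ℝ κ) :=
    ContinuousOn.finset_inf'_apply _ fun i _ => ContinuousOn.div (by fun_prop) (by fun_prop)
      fun v hv => (sum_mul_pos_of_mem_stdSimplex hv (hb i)).ne'
  exact hcont.congr fun v _ => (inf'_univ_eq_ciInf _).symm

lemma exists_pos_smul_mem_stdSimplex {w : κ → ℝ} (hw : 0 ≤ w) (hw0 : w ≠ 0) :
    ∃ r : ℝ, 0 < r ∧ r • w ∈ stdSimplex ℝ κ := by
  have hsum : 0 < ∑ j, w j := by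
    obtain ⟨j, hj⟩ := Function.ne_iff.1 hw0
    exact sum_pos' (fun j _ => hw j) ⟨j, mem_univ j, (hw j).lt_of_ne' hj⟩
  refine ⟨(∑ j, w j)⁻¹, inv_pos.2 hsum, fun j => mul_nonneg (inv_nonneg.2 hsum.le) (hw j), ?_⟩
  simp [← mul_sum, hsum.ne']

end FractionalProgram

theorem stmt1_general (imax jmax : ℕ) (h0 : 0 < imax) (hij : imax < jmax)
    (a b : Fin imax → Fin jmax → ℝ)
    (hb : ∀ i j, 0 < b i j) :
    ∃ w : Fin jmax → ℝ, (∀ j, 0 ≤ w j) ∧ (∑ j, w j = 1) ∧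
      (Finset.univ.filter fun j => w j ≠ 0).card ≤ imax ∧
      ∀ v : Fin jmax → ℝ, (∀ j, 0 ≤ v j) → (∑ j, v j = 1) →
        (⨅ i : Fin imax, (∑ j, v j * a i j) / (∑ j, v j * b i j)) ≤
          ⨅ i : Fin imax, (∑ j, w j * a i j) / (∑ j, w j * b i j) := by
  have : Nonempty (Fin imax) := ⟨⟨0, h0⟩⟩
  have hden {v} (hv : v ∈ stdSimplex ℝ (Fin jmax)) i := sum_mul_pos_of_mem_stdSimplex hv (hb i)
  obtain ⟨w₀, hw₀, hmax⟩ := (isCompact_stdSimplex ℝ (Fin jmax)).exists_isMaxOn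
    ⟨_, single_mem_stdSimplex ℝ ⟨0, h0.trans hij⟩⟩ (continuousOn_minRatio a b hb)
  set M := gapMatrix a b (minRatio a b w₀)
  obtain ⟨w', hw', hw'0, hw'M, hcard⟩ := exists_card_filter_ne_zero_le M hw₀.1
    (by rintro rfl; simpa using hw₀.2) ((le_minRatio_iff a b (hden hw₀) _).1 le_rfl)
  obtain ⟨r, hr, hw⟩ := exists_pos_smul_mem_stdSimplex hw' hw'0
  have hwM : 0 ≤ (r • w') ᵥ* M := by
    rw [smul_vecMul]
    exact smul_nonneg hr.le hw'M
  refine ⟨r • w', hw.1, hw.2, by simpa [hr.ne'] using hcard, fun v hv₁ hv₂ => ?_⟩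
  exact (hmax ⟨hv₁, hv₂⟩).trans ((le_minRatio_iff a b (hden hw) _).2 hwM)

/-- Homogeneous linear fractional program over the probability
simplex with nonnegative numerator coefficients `a` and positive denominator
coefficients `b`: there is a maximizer of
`w ↦ min_i (∑ j, w j * a i j)/(∑ j, w j * b i j)` whose support has at most
`imax` elements. -/
theorem stmt1 (imax jmax : ℕ) (h0 : 0 < imax) (hij : imax < jmax)
    (a b : Fin imax → Fin jmax → ℝ)
    (ha : ∀ i j, 0 ≤ a i j) (hb : ∀ i j, 0 < b i j) :
    ∃ w : Fin jmax → ℝ, (∀ j, 0 ≤ w j) ∧ (∑ j, w j = 1) ∧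
      (Finset.univ.filter fun j => w j ≠ 0).card ≤ imax ∧
      ∀ v : Fin jmax → ℝ, (∀ j, 0 ≤ v j) → (∑ j, v j = 1) →
        (⨅ i : Fin imax, (∑ j, v j * a i j) / (∑ j, v j * b i j)) ≤
          ⨅ i : Fin imax, (∑ j, w j * a i j) / (∑ j, w j * b i j) :=
  stmt1_general imax jmax h0 hij a b hb
end

section
/- Let 𝒳, 𝒮, 𝒴, 𝒰, 𝒥 be finite nonempty types with |𝒳| ≥ 2. Let p be a pmf on 𝒳 × 𝒮; for each (x,s) ∈ 𝒳 × 𝒮 let W(·|x,s) be a strictly positive pmf on 𝒴; for each j ∈ 𝒥 let q_j(·|y) be a strictly positive pmf on 𝒰 for every y ∈ 𝒴. For (x,s,j) define the pmf P_{x,s,j}(u) = Σ_{y∈𝒴} W(y|x,s) q_j(u|y) on 𝒰, and define the per-group rate r_j = Σ_{x,s,y,u} p(x,s) W(y|x,s) q_j(u|y) log( q_j(u|y) / P_{x,s,j}(u) ); assume r_j > 0 for every j ∈ 𝒥. For a pmf w on 𝒥 define F(w) = [ min over s ∈ 𝒮 and pairs x₁ ≠ x₂ in 𝒳 of sup_{λ∈[0,1]}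 Σ_{j∈𝒥} w_j · d_λ(P_{x₁,s,j}, P_{x₂,s,j}) ] / ( Σ_{j∈𝒥} w_j r_j ). Then for every pmf w on 𝒥 there exists a pmf w′ on 𝒥 whose support has at most C(|𝒳|,2)·|𝒮| elements (C(n,2) = n(n−1)/2) and such that F(w′) ≥ F(w). -/
open Finset

/-- The Chernoff divergence `d_λ(P,Q) = -log ∑ u, P(u)^(1-λ) * Q(u)^λ`
(real powers). -/
noncomputable def chernoffDiv {U : Type*} [Fintype U] (lam : ℝ) (P Q : U → ℝ) : ℝ :=
  -Real.log (∑ u, P u ^ (1 - lam) * Q u ^ lam)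

/-- The objective `F(w)`: the minimum over context letters `s` and pairs
`x₁ ≠ x₂` of the supremum over `λ ∈ [0,1]` of the `w`-weighted Chernoff
divergence, divided by the `w`-weighted per-group rate. -/
noncomputable def ceoObjective {X S U J : Type*} [Fintype X] [Fintype S] [Fintype U] [Fintype J]
    (P : X → S → J → U → ℝ) (r : J → ℝ) (w : J → ℝ) : ℝ :=
  (⨅ st : {t : S × X × X // t.2.1 ≠ t.2.2},
      ⨆ lam : Set.Icc (0 : ℝ) 1,
        ∑ j, w j * chernoffDiv (lam : ℝ) (P st.1.2.1 st.1.1 j) (P st.1.2.2 st.1.1 j)) /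
    ∑ j, w j * r j

/-! Let `c = F(w)`. For each letter `s` and unordered pair `{x₁, x₂}` fix a `λ` at which the
supremum for `w` is attained; the supremum is the same for both orders of the pair (substitute
`1 - λ`). Then `F(w') ≥ c` follows from the `|S| · C(|X|, 2)` linear inequalities
`∑ j, w'_j (d_λ(P_{x₁,s,j}, P_{x₂,s,j}) - c r_j) ≥ 0`, which `w` satisfies. A conic Carathéodory
argument yields a nonnegative, nonzero solution supported on at most as many groups as there are
inequalities, and normalising it gives `w'`. -/

theorem exists_sum_smul_eq_of_mem_span {R M J : Type*} [Semiring R] [AddCommMonoid M]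
    [Module R M] [Fintype J] {v : J → M} {T : Finset J} {x : M}
    (hx : x ∈ Submodule.span R (v '' T)) :
    ∃ γ : J → R, (∀ j ∉ T, γ j = 0) ∧ ∑ j, γ j • v j = x := by
  obtain ⟨l, hlT, hl⟩ := Finsupp.mem_span_image_iff_linearCombination R |>.mp hx
  rw [Finsupp.linearCombination_apply, Finsupp.sum_fintype _ _ (by simp)] at hl
  exact ⟨l, fun j hj =>
    Finsupp.notMem_support_iff.mp fun hmem => hj (Finsupp.mem_supported _ _ |>.mp hlT hmem), hl⟩

section ConicCombination

variable {𝕜 M J : Type*} [Field 𝕜] [LinearOrder 𝕜] [IsStrictOrderedRing 𝕜]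
  [AddCommGroup M] [Module 𝕜 M] [Fintype J]

theorem exists_pos_dependency_of_not_linearIndepOn {v : J → M} {T : Finset J}
    (h : ¬LinearIndepOn 𝕜 v (T : Set J)) :
    ∃ γ : J → 𝕜, (∀ j ∉ T, γ j = 0) ∧ ∑ j, γ j • v j = 0 ∧ ∃ j, 0 < γ j := by
  obtain ⟨l, hlT, hl, hl0⟩ := linearDepOn_iff'.mp h
  rw [Finsupp.linearCombination_apply, Finsupp.sum_fintype _ _ (by simp)] at hl
  have hsupp : ∀ j ∉ T, l j = 0 := fun j hj =>
    Finsupp.notMem_support_iff.mp fun hmem => hj (Finsupp.mem_supported _ _ |>.mp hlT hmem)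
  obtain ⟨j, hj⟩ := DFunLike.ne_iff.mp hl0
  rcases (show l j ≠ 0 from hj).lt_or_gt with hneg | hpos
  · exact ⟨-l, by simpa using hsupp, by simpa [neg_smul] using hl, j, by simpa using hneg⟩
  · exact ⟨l, hsupp, hl, j, hpos⟩

theorem exists_sub_smul_nonneg_support_ssubset {β γ : J → 𝕜} (hβ : 0 ≤ β)
    (hγβ : ∀ j, β j = 0 → γ j = 0) (hγ : ∃ j, 0 < γ j) :
    ∃ θ : 𝕜, 0 ≤ β - θ • γ ∧
      ({j | (β - θ • γ) j ≠ 0} : Finset J) ⊂ ({j | β j ≠ 0} : Finset J) := by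
  obtain ⟨j₀, hj₀⟩ := hγ
  obtain ⟨m, hm, hmin⟩ := exists_min_image {j | 0 < γ j} (fun j => β j / γ j) ⟨j₀, by simpa⟩
  rw [mem_filter_univ] at hm
  refine ⟨β m / γ m, fun j => ?_, ssubset_of_subset_of_ne (fun j => ?_) fun h => ?_⟩
  · rcases le_or_gt (γ j) 0 with hj | hj
    · have : β m / γ m * γ j ≤ 0 := mul_nonpos_of_nonneg_of_nonpos (div_nonneg (hβ m) hm.le) hj
      simpa using (hβ j).trans (le_sub_self_iff _ |>.mpr this)
    · simpa [sub_nonneg] using (le_div_iff₀ hj).mp (hmin j (by simpa using hj))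
  · simp only [mem_filter_univ, ne_eq]
    intro hj hβj
    simp [hβj, hγβ j hβj] at hj
  · have hm' : m ∈ ({j | β j ≠ 0} : Finset J) := by simpa using fun h0 => hm.ne' (hγβ m h0)
    rw [← h] at hm'
    simp [div_mul_cancel₀ _ hm.ne'] at hm'

theorem exists_add_smul_nonneg {β γ : J → 𝕜} (hβ : 0 ≤ β) (hγβ : ∀ j, β j = 0 → γ j = 0) :
    ∃ s : 𝕜, 0 ≤ s ∧ 0 ≤ γ + s • β := by
  have hterm : ∀ j, 0 ≤ |γ j| / β j := fun j => div_nonneg (abs_nonneg _) (hβ j)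
  refine ⟨∑ j, |γ j| / β j, sum_nonneg fun j _ => hterm j, fun j => ?_⟩
  rcases (hβ j).eq_or_lt with h0 | hpos
  · simp [← h0, hγβ j h0.symm]
  · have : |γ j| ≤ (∑ i, |γ i| / β i) * β j :=
      (div_le_iff₀ hpos).mp (single_le_sum (fun i _ => hterm i) (mem_univ j))
    simp only [Pi.add_apply, Pi.smul_apply, smul_eq_mul, Pi.zero_apply]
    linarith [neg_abs_le (γ j)]

theorem exists_nonneg_sum_smul_eq_card_support_le_finrank [FiniteDimensional 𝕜 M] (v : J → M)
    {β : J → 𝕜} (hβ : 0 ≤ β) :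
    ∃ β' : J → 𝕜, 0 ≤ β' ∧ ∑ j, β' j • v j = ∑ j, β j • v j ∧
      #{j | β' j ≠ 0} ≤ Module.finrank 𝕜 M := by
  induction hn : #{j | β j ≠ 0} using Nat.strong_induction_on generalizing β with
  | _ n ih =>
  by_cases hind : LinearIndepOn 𝕜 v (({j | β j ≠ 0} : Finset J) : Set J)
  · exact ⟨β, hβ, rfl, by simpa using hind.fintype_card_le_finrank⟩
  obtain ⟨γ, hγT, hγv, hγ⟩ := exists_pos_dependency_of_not_linearIndepOn hind
  obtain ⟨θ, hθ, hss⟩ := exists_sub_smul_nonneg_support_ssubset hβ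
    (fun j hj => hγT j (by simpa using hj)) hγ
  obtain ⟨β', hβ', hsum, hcard⟩ := ih _ (hn ▸ card_lt_card hss) hθ rfl
  refine ⟨β', hβ', ?_, hcard⟩
  simp [hsum, sub_smul, sum_sub_distrib, mul_smul, ← smul_sum, hγv]

variable {R : Type*} [Fintype R] [Nonempty R]

theorem exists_nonneg_ne_zero_sum_smul_pos_card_support_le_of_span_eq_top (v : J → R → 𝕜)
    {β : J → 𝕜} (hβ : 0 ≤ β) (hv : 0 ≤ ∑ j, β j • v j) {T : Finset J}
    (hT : ∀ j ∈ T, β j ≠ 0) (hspan : Submodule.span 𝕜 (v '' T) = ⊤) :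
    ∃ β' : J → 𝕜, 0 ≤ β' ∧ β' ≠ 0 ∧ 0 < ∑ j, β' j • v j ∧ #{j | β' j ≠ 0} ≤ Fintype.card R := by
  obtain ⟨γ, hγT, hγv⟩ := exists_sum_smul_eq_of_mem_span (v := v) (x := 1)
    (hspan ▸ Submodule.mem_top)
  obtain ⟨s, hs, hD⟩ := exists_add_smul_nonneg hβ fun j hj => hγT j fun hjT => hT j hjT hj
  obtain ⟨β', hβ', hsum, hcard⟩ := exists_nonneg_sum_smul_eq_card_support_le_finrank v hD
  have hpos : 0 < ∑ j, β' j • v j := by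
    rw [hsum]
    simpa [add_smul, mul_smul, sum_add_distrib, ← smul_sum, hγv] using
      lt_add_of_lt_of_nonneg zero_lt_one (smul_nonneg hs hv)
  refine ⟨β', hβ', ?_, hpos, by simpa using hcard⟩
  rintro rfl
  simp at hpos

theorem exists_nonneg_ne_zero_sum_smul_nonneg_card_support_le (v : J → R → 𝕜) {β : J → 𝕜}
    (hβ : 0 ≤ β) (hβ0 : β ≠ 0) (hv : 0 ≤ ∑ j, β j • v j) :
    ∃ β' : J → 𝕜, 0 ≤ β' ∧ β' ≠ 0 ∧ 0 ≤ ∑ j, β' j • v j ∧ #{j | β' j ≠ 0} ≤ Fintype.card R := by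
  classical
  induction hn : #{j | β j ≠ 0} using Nat.strong_induction_on generalizing β with
  | _ n ih =>
  by_cases hsmall : n ≤ Fintype.card R
  · exact ⟨β, hβ, hβ0, hv, hn ▸ hsmall⟩
  obtain ⟨j₀, hj₀⟩ := Function.ne_iff.mp hβ0
  set T : Finset J := {j | β j ≠ 0}
  have hj₀T : j₀ ∈ T := by simpa [T] using hj₀
  have hT : ∀ j ∈ T.erase j₀, β j ≠ 0 := fun j hj => by simpa [T] using mem_of_mem_erase hj
  by_cases hind : LinearIndepOn 𝕜 v ((T.erase j₀ : Finset J) : Set J)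
  · have hspan : Submodule.span 𝕜 (v '' (T.erase j₀ : Finset J)) = ⊤ := by
      rw [Set.image_eq_range]
      refine hind.span_eq_top_of_card_eq_finrank' (le_antisymm ?_ ?_)
      · simpa using hind.fintype_card_le_finrank
      · simp only [Module.finrank_fintype_fun_eq_card, coe_sort_coe, Fintype.card_coe,
          card_erase_of_mem hj₀T]
        omega
    obtain ⟨β', hβ', hβ'0, hpos, hcard⟩ :=
      exists_nonneg_ne_zero_sum_smul_pos_card_support_le_of_span_eq_top v hβ hv hT hspan
    exact ⟨β', hβ', hβ'0, hpos.le, hcard⟩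
  -- a dependency avoiding `j₀` shrinks the support without killing the coordinate `j₀`
  obtain ⟨γ, hγT, hγv, hγ⟩ := exists_pos_dependency_of_not_linearIndepOn hind
  obtain ⟨θ, hθ, hss⟩ := exists_sub_smul_nonneg_support_ssubset hβ
    (fun j hj => hγT j fun hjT => hT j hjT hj) hγ
  have hsum : ∑ j, (β - θ • γ) j • v j = ∑ j, β j • v j := by
    simp [sub_smul, sum_sub_distrib, mul_smul, ← smul_sum, hγv]
  refine ih _ (hn ▸ card_lt_card hss) hθ (Function.ne_iff.mpr ⟨j₀, ?_⟩) (hsum ▸ hv) rfl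
  simpa [hγT j₀ (notMem_erase j₀ T)] using hj₀

theorem exists_sum_eq_one_sum_smul_nonneg_card_support_le (v : J → R → 𝕜) {w : J → 𝕜}
    (hw : 0 ≤ w) (hw0 : w ≠ 0) (hv : 0 ≤ ∑ j, w j • v j) :
    ∃ w' : J → 𝕜, 0 ≤ w' ∧ ∑ j, w' j = 1 ∧ #{j | w' j ≠ 0} ≤ Fintype.card R ∧
      0 ≤ ∑ j, w' j • v j := by
  obtain ⟨β, hβ, hβ0, hβv, hcard⟩ :=
    exists_nonneg_ne_zero_sum_smul_nonneg_card_support_le v hw hw0 hv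
  have hpos : 0 < ∑ j, β j := by
    obtain ⟨j, hj⟩ := Function.ne_iff.mp hβ0
    exact sum_pos' (fun i _ => hβ i) ⟨j, mem_univ j, (hβ j).lt_of_ne' hj⟩
  refine ⟨(∑ j, β j)⁻¹ • β, smul_nonneg (inv_nonneg.mpr hpos.le) hβ, ?_, ?_, ?_⟩
  · simp [← mul_sum, hpos.ne']
  · simpa [hpos.ne'] using hcard
  · simpa [mul_smul, ← smul_sum] using smul_nonneg (inv_nonneg.mpr hpos.le) hβv

end ConicCombination

theorem Sym2.out_mk_eq_or_eq_swap {α : Type*} (a b : α) :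
    s(a, b).out = (a, b) ∨ s(a, b).out = (b, a) := by
  have h : s(s(a, b).out.1, s(a, b).out.2) = s(a, b) := Quot.out_eq _
  rcases Sym2.eq_iff.mp h with ⟨h₁, h₂⟩ | ⟨h₁, h₂⟩
  · exact .inl (Prod.ext h₁ h₂)
  · exact .inr (Prod.ext h₁ h₂)

theorem Sym2.out_fst_ne_out_snd {α : Type*} {z : Sym2 α} (hz : ¬z.IsDiag) : z.out.1 ≠ z.out.2 :=
  fun h => hz (by rw [← Quot.out_eq z]; exact Sym2.mk_isDiag_iff.mpr h)

instance Sym2.nonempty_not_isDiag {α : Type*} [Nontrivial α] : Nonempty {z : Sym2 α // ¬z.IsDiag} :=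
  let ⟨a, b, hab⟩ := exists_pair_ne α
  ⟨⟨s(a, b), Sym2.mk_isDiag_iff.not.mpr hab⟩⟩

section Chernoff

variable {X S U J : Type*} [Fintype U] [Fintype J]

theorem chernoffDiv_one_sub (lam : ℝ) (P Q : U → ℝ) :
    chernoffDiv (1 - lam) P Q = chernoffDiv lam Q P := by
  simp only [chernoffDiv, sub_sub_cancel, mul_comm]

theorem continuous_chernoffDiv [Nonempty U] {P Q : U → ℝ} (hP : ∀ u, 0 < P u)
    (hQ : ∀ u, 0 < Q u) : Continuous fun lam => chernoffDiv lam P Q := by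
  have hsum : ∀ lam : ℝ, ∑ u, P u ^ (1 - lam) * Q u ^ lam ≠ 0 := fun lam =>
    (sum_pos (fun u _ => by have := hP u; have := hQ u; positivity) univ_nonempty).ne'
  refine (Continuous.log ?_ hsum).neg
  exact continuous_finsetSum _ fun u _ =>
    (continuous_const.rpow (continuous_const.sub continuous_id) fun _ => .inl (hP u).ne').mul
      (continuous_const.rpow continuous_id fun _ => .inl (hQ u).ne')

noncomputable def chernoffSum (P : X → S → J → U → ℝ) (w : J → ℝ) (t : S × X × X) (lam : ℝ) :
    ℝ :=
  ∑ j, w j * chernoffDiv lam (P t.2.1 t.1 j) (P t.2.2 t.1 j)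

noncomputable def chernoffSup (P : X → S → J → U → ℝ) (w : J → ℝ) (t : S × X × X) : ℝ :=
  ⨆ lam : Set.Icc (0 : ℝ) 1, chernoffSum P w t lam

variable (P : X → S → J → U → ℝ) (w : J → ℝ)

theorem chernoffSup_swap (s : S) (a b : X) :
    chernoffSup P w (s, b, a) = chernoffSup P w (s, a, b) := by
  rw [chernoffSup, chernoffSup, ← unitInterval.symmHomeomorph.toEquiv.iSup_comp]
  refine iSup_congr fun lam => sum_congr rfl fun j _ => ?_
  exact congrArg (w j * ·) (chernoffDiv_one_sub lam _ _)

theorem chernoffSup_out_mk (s : S) (a b : X) :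
    chernoffSup P w (s, s(a, b).out) = chernoffSup P w (s, a, b) := by
  rcases Sym2.out_mk_eq_or_eq_swap a b with h | h <;> rw [h]
  exact chernoffSup_swap P w s a b

theorem le_ceoObjective_iff [Fintype X] [Fintype S] [Nontrivial X] [Nonempty S] {r : J → ℝ}
    {c : ℝ} (hden : 0 < ∑ j, w j * r j) :
    c ≤ ceoObjective P r w ↔
      ∀ t : S × X × X, t.2.1 ≠ t.2.2 → c * ∑ j, w j * r j ≤ chernoffSup P w t := by
  obtain ⟨a, b, hab⟩ := exists_pair_ne X
  have : Nonempty {t : S × X × X // t.2.1 ≠ t.2.2} := ⟨⟨(Classical.arbitrary S, a, b), hab⟩⟩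
  rw [ceoObjective, le_div_iff₀ hden, le_ciInf_iff (Set.finite_range _).bddBelow]
  exact ⟨fun h t ht => h ⟨t, ht⟩, fun h t => h t.1 t.2⟩

variable [Nonempty U] {P}

theorem exists_isMaxOn_chernoffSum (hP : ∀ x s j u, 0 < P x s j u) (t : S × X × X) :
    ∃ lam ∈ Set.Icc (0 : ℝ) 1, IsMaxOn (chernoffSum P w t) (Set.Icc 0 1) lam :=
  isCompact_Icc.exists_isMaxOn (Set.nonempty_Icc.mpr zero_le_one) <|
    (continuous_finsetSum _ fun _ _ => continuous_const.mul
      (continuous_chernoffDiv (hP _ _ _) (hP _ _ _))).continuousOn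

theorem exists_chernoffSup_eq_chernoffSum (hP : ∀ x s j u, 0 < P x s j u) (t : S × X × X) :
    ∃ lam ∈ Set.Icc (0 : ℝ) 1, chernoffSup P w t = chernoffSum P w t lam := by
  obtain ⟨lam, hlam, hmax⟩ := exists_isMaxOn_chernoffSum w hP t
  exact ⟨lam, hlam, hmax.iSup_eq hlam⟩

theorem chernoffSum_le_chernoffSup (hP : ∀ x s j u, 0 < P x s j u) (t : S × X × X) {lam : ℝ}
    (hlam : lam ∈ Set.Icc (0 : ℝ) 1) : chernoffSum P w t lam ≤ chernoffSup P w t := by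
  obtain ⟨lam₀, hlam₀, hmax⟩ := exists_isMaxOn_chernoffSum w hP t
  rw [chernoffSup, hmax.iSup_eq hlam₀]
  exact hmax hlam

theorem exists_linear_constraints_of_le_chernoffSup (hP : ∀ x s j u, 0 < P x s j u)
    {r : J → ℝ} {c : ℝ}
    (hc : ∀ t : S × X × X, t.2.1 ≠ t.2.2 → c * ∑ j, w j * r j ≤ chernoffSup P w t) :
    ∃ v : J → S × {z : Sym2 X // ¬z.IsDiag} → ℝ, 0 ≤ ∑ j, w j • v j ∧
      ∀ w' : J → ℝ, 0 ≤ ∑ j, w' j • v j →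
        ∀ t : S × X × X, t.2.1 ≠ t.2.2 → c * ∑ j, w' j * r j ≤ chernoffSup P w' t := by
  let rep : S × {z : Sym2 X // ¬z.IsDiag} → S × X × X := fun ρ => (ρ.1, ρ.2.1.out)
  choose lam hlam hsup using fun ρ => exists_chernoffSup_eq_chernoffSum w hP (rep ρ)
  let v : J → S × {z : Sym2 X // ¬z.IsDiag} → ℝ := fun j ρ =>
    chernoffDiv (lam ρ) (P (rep ρ).2.1 (rep ρ).1 j) (P (rep ρ).2.2 (rep ρ).1 j) - c * r j
  have hv : ∀ (w' : J → ℝ) ρ,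
      (∑ j, w' j • v j) ρ = chernoffSum P w' (rep ρ) (lam ρ) - c * ∑ j, w' j * r j := by
    intro w' ρ
    simp [v, chernoffSum, mul_sub, mul_sum, mul_left_comm]
  refine ⟨v, fun ρ => ?_, fun w' hw' ⟨s, a, b⟩ hab => ?_⟩
  · simpa [hv, ← hsup] using hc (rep ρ) (Sym2.out_fst_ne_out_snd ρ.2.2)
  let ρ : S × {z : Sym2 X // ¬z.IsDiag} := (s, ⟨s(a, b), Sym2.mk_isDiag_iff.not.mpr hab⟩)
  have hρ := hw' ρ
  rw [Pi.zero_apply, hv] at hρ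
  rw [← chernoffSup_out_mk]
  exact (sub_nonneg.mp hρ).trans (chernoffSum_le_chernoffSup w' hP _ (hlam ρ))

end Chernoff

theorem sum_mul_pos_of_sum_eq_one {J : Type*} [Fintype J] {w r : J → ℝ} (hw : 0 ≤ w)
    (hw1 : ∑ j, w j = 1) (hr : ∀ j, 0 < r j) : 0 < ∑ j, w j * r j := by
  obtain ⟨j, hj⟩ : ∃ j, w j ≠ 0 := by
    by_contra! h
    simp [h] at hw1
  exact sum_pos' (fun i _ => mul_nonneg (hw i) (hr i).le)
    ⟨j, mem_univ j, mul_pos ((hw j).lt_of_ne' hj) (hr j)⟩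

theorem stmt2_general {X S Y U J : Type*} [Fintype X] [Fintype S] [Fintype Y] [Fintype U] [Fintype J]
    [Nonempty S] [Nonempty Y] [Nonempty U]
    (hX : 2 ≤ Fintype.card X)
    (W : X → S → Y → ℝ) (hW0 : ∀ x s y, 0 < W x s y)
    (q : J → Y → U → ℝ) (hq0 : ∀ j y u, 0 < q j y u)
    (P : X → S → J → U → ℝ)
    (hP : ∀ x s j u, P x s j u = ∑ y, W x s y * q j y u)
    (r : J → ℝ)
    (hrpos : ∀ j, 0 < r j)
    (w : J → ℝ) (hw0 : ∀ j, 0 ≤ w j) (hw1 : ∑ j, w j = 1) :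
    ∃ w' : J → ℝ, (∀ j, 0 ≤ w' j) ∧ (∑ j, w' j = 1) ∧
      (Finset.univ.filter fun j => w' j ≠ 0).card ≤
        Nat.choose (Fintype.card X) 2 * Fintype.card S ∧
      ceoObjective P r w ≤ ceoObjective P r w' := by
  classical
  have : Nontrivial X := Fintype.one_lt_card_iff_nontrivial.mp hX
  have hPpos : ∀ x s j u, 0 < P x s j u := fun x s j u =>
    hP x s j u ▸ sum_pos (fun y _ => mul_pos (hW0 x s y) (hq0 j y u)) univ_nonempty
  obtain ⟨v, hwv, hv⟩ := exists_linear_constraints_of_le_chernoffSup w hPpos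
    ((le_ceoObjective_iff P w (sum_mul_pos_of_sum_eq_one hw0 hw1 hrpos)).mp le_rfl)
  obtain ⟨w', hw'0, hw'1, hcard, hw'v⟩ :=
    exists_sum_eq_one_sum_smul_nonneg_card_support_le v hw0 (fun h => by simp [h] at hw1) hwv
  refine ⟨w', hw'0, hw'1, ?_, ?_⟩
  · rwa [Fintype.card_prod, Sym2.card_subtype_not_diag, mul_comm] at hcard
  · exact (le_ceoObjective_iff P w' (sum_mul_pos_of_sum_eq_one hw'0 hw'1 hrpos)).mpr (hv w' hw'v)

/-- group-cardinality reduction for the CEO objective: any mixing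
pmf `w` on groups can be replaced by a pmf `w'` supported on at most
`C(|X|,2)·|S|` groups without decreasing the objective. -/
theorem stmt2 {X S Y U J : Type*} [Fintype X] [Fintype S] [Fintype Y] [Fintype U] [Fintype J]
    [Nonempty X] [Nonempty S] [Nonempty Y] [Nonempty U] [Nonempty J]
    (hX : 2 ≤ Fintype.card X)
    (p : X × S → ℝ) (hp0 : ∀ z, 0 ≤ p z) (hp1 : ∑ z, p z = 1)
    (W : X → S → Y → ℝ) (hW0 : ∀ x s y, 0 < W x s y) (hW1 : ∀ x s, ∑ y, W x s y = 1)
    (q : J → Y → U → ℝ) (hq0 : ∀ j y u, 0 < q j y u) (hq1 : ∀ j y, ∑ u, q j y u = 1)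
    (P : X → S → J → U → ℝ)
    (hP : ∀ x s j u, P x s j u = ∑ y, W x s y * q j y u)
    (r : J → ℝ)
    (hr : ∀ j, r j = ∑ x, ∑ s, ∑ y, ∑ u,
        p (x, s) * W x s y * q j y u * Real.log (q j y u / P x s j u))
    (hrpos : ∀ j, 0 < r j)
    (w : J → ℝ) (hw0 : ∀ j, 0 ≤ w j) (hw1 : ∑ j, w j = 1) :
    ∃ w' : J → ℝ, (∀ j, 0 ≤ w' j) ∧ (∑ j, w' j = 1) ∧
      (Finset.univ.filter fun j => w' j ≠ 0).card ≤
        Nat.choose (Fintype.card X) 2 * Fintype.card S ∧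
      ceoObjective P r w ≤ ceoObjective P r w' :=
  stmt2_general hX W hW0 q hq0 P hP r hrpos w hw0 hw1
end

section
/- Let L be a positive integer and for each ℓ ∈ {1,…,L} let 𝒰_ℓ be a finite type and p_ℓ, q_ℓ pmfs on 𝒰_ℓ. Define the product pmfs P(u) = Π_{ℓ=1}^L p_ℓ(u_ℓ) and Q(u) = Π_{ℓ=1}^L q_ℓ(u_ℓ) on Π_ℓ 𝒰_ℓ. Then for every λ ∈ [0,1] and all sets A ⊆ {u : Q(u) ≥ P(u)} and B ⊆ {u : P(u) ≥ Q(u)}, it holds that Σ_{u∈A} P(u) + Σ_{u∈B} Q(u) ≤ 2 · Π_{ℓ=1}^L ( Σ_{v∈𝒰_ℓ} p_ℓ(v)^{1−λ} q_ℓ(v)^λ ). -/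
/-- Chernoff bound for likelihood-ratio decision regions under
product distributions: for pmfs `p ℓ`, `q ℓ` on finite types `U ℓ`, their
products `P(u) = ∏ ℓ, p ℓ (u ℓ)` and `Q(u) = ∏ ℓ, q ℓ (u ℓ)`, any `λ ∈ [0,1]`,
any `A ⊆ {u | P u ≤ Q u}` and `B ⊆ {u | Q u ≤ P u}` satisfy
`∑_{u∈A} P u + ∑_{u∈B} Q u ≤ 2 ∏ ℓ ∑ v, p ℓ v ^ (1-λ) * q ℓ v ^ λ`. -/
theorem stmt3 (L : ℕ) (hL : 0 < L) (U : Fin L → Type*) [∀ ℓ, Fintype (U ℓ)]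
    (p q : ∀ ℓ, U ℓ → ℝ)
    (hp0 : ∀ ℓ u, 0 ≤ p ℓ u) (hp1 : ∀ ℓ, ∑ u, p ℓ u = 1)
    (hq0 : ∀ ℓ u, 0 ≤ q ℓ u) (hq1 : ∀ ℓ, ∑ u, q ℓ u = 1)
    (lam : ℝ) (hlam : lam ∈ Set.Icc (0 : ℝ) 1)
    (A B : Finset (∀ ℓ, U ℓ))
    (hA : ∀ u ∈ A, (∏ ℓ, p ℓ (u ℓ)) ≤ ∏ ℓ, q ℓ (u ℓ))
    (hB : ∀ u ∈ B, (∏ ℓ, q ℓ (u ℓ)) ≤ ∏ ℓ, p ℓ (u ℓ)) :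
    (∑ u ∈ A, ∏ ℓ, p ℓ (u ℓ)) + (∑ u ∈ B, ∏ ℓ, q ℓ (u ℓ)) ≤
      2 * ∏ ℓ, ∑ v, p ℓ v ^ (1 - lam) * q ℓ v ^ lam := by
  obtain ⟨hl0, hl1⟩ := hlam
  set f : (∀ ℓ, U ℓ) → ℝ := fun u => (∏ ℓ, p ℓ (u ℓ)) ^ (1 - lam) * (∏ ℓ, q ℓ (u ℓ)) ^ lam
    with hf
  have hfnn : ∀ u, 0 ≤ f u := fun u => mul_nonneg
    (Real.rpow_nonneg (Finset.prod_nonneg fun ℓ _ => hp0 ℓ (u ℓ)) _)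
    (Real.rpow_nonneg (Finset.prod_nonneg fun ℓ _ => hq0 ℓ (u ℓ)) _)
  have key : ∑ u : (∀ ℓ, U ℓ), f u = ∏ ℓ, ∑ v, p ℓ v ^ (1 - lam) * q ℓ v ^ lam := by
    rw [Fintype.prod_sum (fun ℓ v => p ℓ v ^ (1 - lam) * q ℓ v ^ lam)]
    refine Finset.sum_congr rfl fun u _ => ?_
    rw [hf]
    simp only [Finset.prod_mul_distrib]
    rw [← Real.finset_prod_rpow _ _ (fun ℓ _ => hp0 ℓ (u ℓ)),
        ← Real.finset_prod_rpow _ _ (fun ℓ _ => hq0 ℓ (u ℓ))]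
  have hP : ∀ u : (∀ ℓ, U ℓ), 0 ≤ ∏ ℓ, p ℓ (u ℓ) := fun u => Finset.prod_nonneg fun ℓ _ => hp0 ℓ (u ℓ)
  have hQ : ∀ u : (∀ ℓ, U ℓ), 0 ≤ ∏ ℓ, q ℓ (u ℓ) := fun u => Finset.prod_nonneg fun ℓ _ => hq0 ℓ (u ℓ)
  have h1 : (∑ u ∈ A, ∏ ℓ, p ℓ (u ℓ)) ≤ ∑ u : (∀ ℓ, U ℓ), f u := by
    refine le_trans (Finset.sum_le_sum fun u hu => ?_)
      (Finset.sum_le_sum_of_subset_of_nonneg (Finset.subset_univ A) fun u _ _ => hfnn u)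
    have : (∏ ℓ, p ℓ (u ℓ)) = (∏ ℓ, p ℓ (u ℓ)) ^ (1 - lam) * (∏ ℓ, p ℓ (u ℓ)) ^ lam := by
      rw [← Real.rpow_add' (hP u) (by norm_num), sub_add_cancel, Real.rpow_one]
    rw [this]
    exact mul_le_mul_of_nonneg_left (Real.rpow_le_rpow (hP u) (hA u hu) hl0)
      (Real.rpow_nonneg (hP u) _)
  have h2 : (∑ u ∈ B, ∏ ℓ, q ℓ (u ℓ)) ≤ ∑ u : (∀ ℓ, U ℓ), f u := by
    refine le_trans (Finset.sum_le_sum fun u hu => ?_)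
      (Finset.sum_le_sum_of_subset_of_nonneg (Finset.subset_univ B) fun u _ _ => hfnn u)
    have : (∏ ℓ, q ℓ (u ℓ)) = (∏ ℓ, q ℓ (u ℓ)) ^ (1 - lam) * (∏ ℓ, q ℓ (u ℓ)) ^ lam := by
      rw [← Real.rpow_add' (hQ u) (by norm_num), sub_add_cancel, Real.rpow_one]
    rw [this]
    exact mul_le_mul_of_nonneg_right (Real.rpow_le_rpow (hQ u) (hB u hu) (by linarith))
      (Real.rpow_nonneg (hQ u) _)
  rw [← key]; linarith
end

section
/- Let 𝒳, 𝒮, 𝒰 be finite types, L a positive integer, p a pmf on 𝒳 × 𝒮, and for each ℓ ∈ {1,…,L} and each (x,s) ∈ 𝒳 × 𝒮 let p_ℓ(·|x,s) be a pmf on 𝒰. Let x̂ : 𝒰^L × 𝒮 → 𝒳 be any maximum-likelihood rule, i.e., for all u ∈ 𝒰^L, s ∈ 𝒮 and x ∈ 𝒳, Π_{ℓ=1}^L p_ℓ(u_ℓ | x̂(u,s), s) ≥ Π_{ℓ=1}^L p_ℓ(u_ℓ | x, s). Then the error probability satisfies Σ_{(x,s)∈𝒳×𝒮} p(x,s) ·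 Σ_{u ∈ 𝒰^L : x̂(u,s) ≠ x} Π_{ℓ=1}^L p_ℓ(u_ℓ|x,s) ≤ Σ_{s∈𝒮} Σ_{(x₁,x₂)∈𝒳×𝒳 : x₁ ≠ x₂} p(x₁,s) · inf_{λ∈[0,1]} Π_{ℓ=1}^L ( Σ_{v∈𝒰} p_ℓ(v|x₁,s)^{1−λ} p_ℓ(v|x₂,s)^λ ). -/
set_option maxHeartbeats 800000

open Finset

lemma pointwise {L : ℕ} (a b : Fin L → ℝ) (ha : ∀ ℓ, 0 ≤ a ℓ) (hb : ∀ ℓ, 0 ≤ b ℓ)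
    (hab : ∏ ℓ, a ℓ ≤ ∏ ℓ, b ℓ) (lam : ℝ) (h0 : 0 ≤ lam) (h1 : lam ≤ 1) :
    ∏ ℓ, a ℓ ≤ ∏ ℓ, a ℓ ^ (1 - lam) * b ℓ ^ lam := by
  rcases eq_or_lt_of_le (Finset.prod_nonneg (fun ℓ _ => ha ℓ) : (0:ℝ) ≤ ∏ ℓ, a ℓ) with h | h
  · rw [← h]
    exact Finset.prod_nonneg fun ℓ _ => mul_nonneg (Real.rpow_nonneg (ha ℓ) _)
      (Real.rpow_nonneg (hb ℓ) _)
  · have hbpos : (0:ℝ) < ∏ ℓ, b ℓ := lt_of_lt_of_le h hab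
    rw [Finset.prod_mul_distrib, Real.finset_prod_rpow _ _ (fun ℓ _ => ha ℓ),
      Real.finset_prod_rpow _ _ (fun ℓ _ => hb ℓ)]
    calc ∏ ℓ, a ℓ = (∏ ℓ, a ℓ) ^ (1 - lam) * (∏ ℓ, a ℓ) ^ lam := by
          rw [← Real.rpow_add h, sub_add_cancel, Real.rpow_one]
      _ ≤ (∏ ℓ, a ℓ) ^ (1 - lam) * (∏ ℓ, b ℓ) ^ lam := by
          apply mul_le_mul_of_nonneg_left (Real.rpow_le_rpow h.le hab h0)
            (Real.rpow_nonneg h.le _)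


/-- Chernoff bound on the error probability of maximum-likelihood
detection from `L` conditionally independent compressed signals together with
the context `s`: the average error probability is bounded by the sum over
contexts `s` and ordered pairs `x₁ ≠ x₂` of
`p(x₁,s) · inf_{λ∈[0,1]} ∏ ℓ ∑ v, p_ℓ(v|x₁,s)^(1-λ) p_ℓ(v|x₂,s)^λ`. -/
theorem stmt4 {X S U : Type*} [Fintype X] [Fintype S] [Fintype U] [DecidableEq X]
    (L : ℕ) (hL : 0 < L)
    (p : X × S → ℝ) (hp0 : ∀ z, 0 ≤ p z) (hp1 : ∑ z, p z = 1)
    (pc : Fin L → X → S → U → ℝ)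
    (hpc0 : ∀ ℓ x s u, 0 ≤ pc ℓ x s u) (hpc1 : ∀ ℓ x s, ∑ u, pc ℓ x s u = 1)
    (xhat : (Fin L → U) → S → X)
    (hML : ∀ (u : Fin L → U) (s : S) (x : X),
      (∏ ℓ, pc ℓ x s (u ℓ)) ≤ ∏ ℓ, pc ℓ (xhat u s) s (u ℓ)) :
    (∑ z : X × S, p z *
        ∑ u ∈ Finset.univ.filter (fun u : Fin L → U => xhat u z.2 ≠ z.1),
          ∏ ℓ, pc ℓ z.1 z.2 (u ℓ)) ≤
      ∑ s : S, ∑ t ∈ Finset.univ.filter (fun t : X × X => t.1 ≠ t.2),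
        p (t.1, s) *
          ⨅ lam : Set.Icc (0 : ℝ) 1,
            ∏ ℓ, ∑ v, pc ℓ t.1 s v ^ (1 - (lam : ℝ)) * pc ℓ t.2 s v ^ (lam : ℝ) := by
  classical
  haveI : Nonempty (Set.Icc (0:ℝ) 1) := ⟨⟨0, by simp⟩⟩
  -- key bound
  have key : ∀ (x₁ x₂ : X) (s : S),
      (∑ u ∈ Finset.univ.filter (fun u : Fin L → U => xhat u s = x₂),
        ∏ ℓ, pc ℓ x₁ s (u ℓ)) ≤
      ⨅ lam : Set.Icc (0 : ℝ) 1,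
        ∏ ℓ, ∑ v, pc ℓ x₁ s v ^ (1 - (lam : ℝ)) * pc ℓ x₂ s v ^ (lam : ℝ) := by
    intro x₁ x₂ s
    apply le_ciInf
    rintro ⟨lam, h0, h1⟩
    calc (∑ u ∈ Finset.univ.filter (fun u : Fin L → U => xhat u s = x₂),
            ∏ ℓ, pc ℓ x₁ s (u ℓ))
        ≤ ∑ u ∈ Finset.univ.filter (fun u : Fin L → U => xhat u s = x₂),
            ∏ ℓ, pc ℓ x₁ s (u ℓ) ^ (1 - lam) * pc ℓ x₂ s (u ℓ) ^ lam := by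
          apply Finset.sum_le_sum
          intro u hu
          rw [Finset.mem_filter] at hu
          exact pointwise _ _ (fun ℓ => hpc0 ℓ x₁ s (u ℓ)) (fun ℓ => hpc0 ℓ x₂ s (u ℓ))
            (hu.2 ▸ hML u s x₁) lam h0 h1
      _ ≤ ∑ u : Fin L → U, ∏ ℓ, pc ℓ x₁ s (u ℓ) ^ (1 - lam) * pc ℓ x₂ s (u ℓ) ^ lam := by
          apply Finset.sum_le_sum_of_subset_of_nonneg (Finset.filter_subset _ _)
          intro u _ _
          exact Finset.prod_nonneg fun ℓ _ => mul_nonneg (Real.rpow_nonneg (hpc0 _ _ _ _) _)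
            (Real.rpow_nonneg (hpc0 _ _ _ _) _)
      _ = ∏ ℓ, ∑ v, pc ℓ x₁ s v ^ (1 - lam) * pc ℓ x₂ s v ^ lam :=
          (Fintype.prod_sum (fun ℓ v => pc ℓ x₁ s v ^ (1 - lam) * pc ℓ x₂ s v ^ lam)).symm
  -- decompose error event
  have decomp : ∀ (x : X) (s : S),
      (∑ u ∈ Finset.univ.filter (fun u : Fin L → U => xhat u s ≠ x),
        ∏ ℓ, pc ℓ x s (u ℓ)) =
      ∑ x₂ ∈ Finset.univ.filter (fun x₂ => x₂ ≠ x),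
        ∑ u ∈ Finset.univ.filter (fun u : Fin L → U => xhat u s = x₂),
          ∏ ℓ, pc ℓ x s (u ℓ) := by
    intro x s
    have hmaps : ∀ u ∈ Finset.univ.filter (fun u : Fin L → U => xhat u s ≠ x),
        xhat u s ∈ Finset.univ.filter (fun x₂ => x₂ ≠ x) :=
      fun u hu => Finset.mem_filter.mpr ⟨Finset.mem_univ _, (Finset.mem_filter.mp hu).2⟩
    rw [← Finset.sum_fiberwise_of_maps_to hmaps (fun u => ∏ ℓ, pc ℓ x s (u ℓ))]
    apply Finset.sum_congr rfl
    intro x₂ hx₂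
    apply Finset.sum_congr _ (fun _ _ => rfl)
    ext u
    simp only [Finset.mem_filter, Finset.mem_univ, true_and]
    have hne : x₂ ≠ x := (Finset.mem_filter.mp hx₂).2
    constructor
    · rintro ⟨_, h⟩; exact h
    · intro h; exact ⟨h ▸ hne, h⟩
  calc (∑ z : X × S, p z *
        ∑ u ∈ Finset.univ.filter (fun u : Fin L → U => xhat u z.2 ≠ z.1),
          ∏ ℓ, pc ℓ z.1 z.2 (u ℓ))
      ≤ ∑ z : X × S, ∑ x₂ ∈ Finset.univ.filter (fun x₂ => z.1 ≠ x₂),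
          p z * ⨅ lam : Set.Icc (0 : ℝ) 1,
            ∏ ℓ, ∑ v, pc ℓ z.1 z.2 v ^ (1 - (lam : ℝ)) * pc ℓ x₂ z.2 v ^ (lam : ℝ) := by
        apply Finset.sum_le_sum
        rintro ⟨x, s⟩ _
        rw [← Finset.mul_sum, decomp]
        apply mul_le_mul_of_nonneg_left _ (hp0 _)
        have hfilter : Finset.univ.filter (fun x₂ : X => x₂ ≠ x)
            = Finset.univ.filter (fun x₂ : X => x ≠ x₂) := by
          ext x₂; simp [ne_comm]
        rw [hfilter]
        exact Finset.sum_le_sum fun x₂ _ => key x x₂ s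
    _ = _ := by
        rw [Fintype.sum_prod_type_right]
        apply Finset.sum_congr rfl
        intro s _
        rw [Finset.sum_filter]
        rw [Fintype.sum_prod_type]
        apply Finset.sum_congr rfl
        intro x _
        rw [Finset.sum_filter]
end

section
/- Let Z be a finite type and let P, Q be pmfs on Z such that Q(z) > 0 whenever P(z) > 0. Let A ⊆ Z be a set with P(A) := Σ_{z∈A} P(z) > 0. Then Q(A) := Σ_{z∈A} Q(z) > 0, and log Q(A) ≥ −( D(P‖Q) + H₂(P(A)) ) / P(A). -/
/-- Log-sum inequality over a finset `S`. -/
lemma logsum_aux {Z : Type*} (P Q : Z → ℝ)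
    (hP0 : ∀ z, 0 ≤ P z) (hQ0 : ∀ z, 0 ≤ Q z)
    (hac : ∀ z, 0 < P z → 0 < Q z)
    (S : Finset Z) (ha : 0 < ∑ z ∈ S, P z) :
    (∑ z ∈ S, P z) * Real.log ((∑ z ∈ S, P z) / (∑ z ∈ S, Q z)) ≤
      ∑ z ∈ S.filter (fun z => 0 < P z), P z * Real.log (P z / Q z) := by
  set a := ∑ z ∈ S, P z with hadef
  set b := ∑ z ∈ S, Q z with hbdef
  obtain ⟨z0, hz0S, hz0⟩ : ∃ z ∈ S, P z ≠ 0 := by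
    by_contra h
    push_neg at h
    have : a = 0 := Finset.sum_eq_zero h
    linarith
  have hPz0 : 0 < P z0 := lt_of_le_of_ne (hP0 z0) (Ne.symm hz0)
  have hb : 0 < b := lt_of_lt_of_le (hac z0 hPz0)
    (Finset.single_le_sum (fun z _ => hQ0 z) hz0S)
  have key : ∀ z ∈ S.filter (fun z => 0 < P z),
      P z - Q z * (a / b) + P z * Real.log (a / b) ≤ P z * Real.log (P z / Q z) := by
    intro z hz
    rw [Finset.mem_filter] at hz
    obtain ⟨hzS, hPz⟩ := hz
    have hQz : 0 < Q z := hac z hPz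
    have hlog : Real.log (P z / Q z) = Real.log ((P z * b) / (Q z * a)) + Real.log (a / b) := by
      rw [← Real.log_mul (by positivity) (by positivity)]
      congr 1
      field_simp
    have h1 : 1 - (Q z * a) / (P z * b) ≤ Real.log ((P z * b) / (Q z * a)) := by
      have h2 := Real.log_le_sub_one_of_pos (show 0 < (Q z * a) / (P z * b) by positivity)
      have h3 : Real.log ((P z * b) / (Q z * a)) = - Real.log ((Q z * a) / (P z * b)) := by
        rw [← Real.log_inv, inv_div]
      linarith
    have h4 : P z * (1 - (Q z * a) / (P z * b)) = P z - Q z * (a / b) := by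
      field_simp
    nlinarith [mul_le_mul_of_nonneg_left h1 (le_of_lt hPz)]
  have hsum := Finset.sum_le_sum key
  have hPf : ∑ z ∈ S.filter (fun z => 0 < P z), P z = a := by
    rw [hadef]
    exact Finset.sum_filter_of_ne (fun z _ hz => lt_of_le_of_ne (hP0 z) (Ne.symm hz))
  have hQf : ∑ z ∈ S.filter (fun z => 0 < P z), Q z ≤ b :=
    Finset.sum_le_sum_of_subset_of_nonneg (Finset.filter_subset _ _)
      (fun z _ _ => hQ0 z)
  have hsplit : ∑ z ∈ S.filter (fun z => 0 < P z),
      (P z - Q z * (a / b) + P z * Real.log (a / b)) =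
      a - (∑ z ∈ S.filter (fun z => 0 < P z), Q z) * (a / b) + a * Real.log (a / b) := by
    rw [Finset.sum_add_distrib, Finset.sum_sub_distrib, ← Finset.sum_mul, ← Finset.sum_mul, hPf]
  rw [hsplit] at hsum
  have hab : 0 < a / b := by positivity
  have hba : b * (a / b) = a := by field_simp
  linarith [mul_le_mul_of_nonneg_right hQf (le_of_lt hab)]

/-- lower bound on the log-probability of a set `A` under `Q` in
terms of the KL divergence `D(P‖Q)` and the binary entropy of `P(A)`:
if `P(A) > 0` then `Q(A) > 0` and `log Q(A) ≥ −(D(P‖Q) + H₂(P(A)))/P(A)`. -/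
theorem stmt5 {Z : Type*} [Fintype Z]
    (P Q : Z → ℝ)
    (hP0 : ∀ z, 0 ≤ P z) (hP1 : ∑ z, P z = 1)
    (hQ0 : ∀ z, 0 ≤ Q z) (hQ1 : ∑ z, Q z = 1)
    (hac : ∀ z, 0 < P z → 0 < Q z)
    (D : ℝ)
    (hD : D = ∑ z ∈ Finset.univ.filter (fun z => 0 < P z), P z * Real.log (P z / Q z))
    (H2 : ℝ → ℝ)
    (hH2 : ∀ t, H2 t = -(t * Real.log t) - (1 - t) * Real.log (1 - t))
    (A : Finset Z) (hA : 0 < ∑ z ∈ A, P z) :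
    0 < ∑ z ∈ A, Q z ∧
      Real.log (∑ z ∈ A, Q z) ≥ -((D + H2 (∑ z ∈ A, P z)) / (∑ z ∈ A, P z)) := by
  classical
  set PA := ∑ z ∈ A, P z with hPA
  set QA := ∑ z ∈ A, Q z with hQA
  -- Q(A) > 0
  obtain ⟨z0, hz0S, hz0⟩ : ∃ z ∈ A, P z ≠ 0 := by
    by_contra h
    push_neg at h
    have : PA = 0 := Finset.sum_eq_zero h
    linarith
  have hPz0 : 0 < P z0 := lt_of_le_of_ne (hP0 z0) (Ne.symm hz0)
  have hQApos : 0 < QA := lt_of_lt_of_le (hac z0 hPz0)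
    (Finset.single_le_sum (fun z _ => hQ0 z) hz0S)
  refine ⟨hQApos, ?_⟩
  -- complement masses
  have hPcsum : ∑ z ∈ Aᶜ, P z = 1 - PA := by
    have h := Finset.sum_add_sum_compl A P
    rw [hP1] at h; linarith
  have hQcsum : ∑ z ∈ Aᶜ, Q z = 1 - QA := by
    have h := Finset.sum_add_sum_compl A Q
    rw [hQ1] at h; linarith
  -- split D
  have hDsplit : D = (∑ z ∈ A.filter (fun z => 0 < P z), P z * Real.log (P z / Q z)) +
      (∑ z ∈ Aᶜ.filter (fun z => 0 < P z), P z * Real.log (P z / Q z)) := by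
    rw [hD]
    simp only [Finset.sum_filter]
    exact (Finset.sum_add_sum_compl A _).symm
  -- bound on A part
  have hApart := logsum_aux P Q hP0 hQ0 hac A hA
  -- bound on Aᶜ part
  have hAcpart : (1 - PA) * Real.log (1 - PA) ≤
      ∑ z ∈ Aᶜ.filter (fun z => 0 < P z), P z * Real.log (P z / Q z) := by
    rcases lt_or_ge 0 (1 - PA) with hc | hc
    · have hc' : 0 < ∑ z ∈ Aᶜ, P z := by rw [hPcsum]; exact hc
      have h1 := logsum_aux P Q hP0 hQ0 hac Aᶜ hc'
      rw [hPcsum, hQcsum] at h1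
      -- need log((1-PA)/(1-QA)) ≥ log(1-PA)
      obtain ⟨z1, hz1S, hz1⟩ : ∃ z ∈ Aᶜ, P z ≠ 0 := by
        by_contra h
        push_neg at h
        have : ∑ z ∈ Aᶜ, P z = 0 := Finset.sum_eq_zero h
        linarith
      have hPz1 : 0 < P z1 := lt_of_le_of_ne (hP0 z1) (Ne.symm hz1)
      have hQc : 0 < 1 - QA := by
        rw [← hQcsum]
        exact lt_of_lt_of_le (hac z1 hPz1)
          (Finset.single_le_sum (fun z _ => hQ0 z) hz1S)
      have hQc1 : 1 - QA ≤ 1 := by linarith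
      have hle : 1 - PA ≤ (1 - PA) / (1 - QA) := by
        rw [le_div_iff₀ hQc]
        nlinarith
      have hlog : Real.log (1 - PA) ≤ Real.log ((1 - PA) / (1 - QA)) :=
        Real.log_le_log hc hle
      nlinarith [mul_le_mul_of_nonneg_left hlog (le_of_lt hc)]
    · -- 1 - PA ≤ 0, in fact = 0 since PA ≤ 1
      have hPA1 : PA ≤ 1 := by
        have := Finset.sum_add_sum_compl A P
        rw [hP1] at this
        have h0 : 0 ≤ ∑ z ∈ Aᶜ, P z := Finset.sum_nonneg (fun z _ => hP0 z)
        linarith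
      have heq : (1 : ℝ) - PA = 0 := le_antisymm hc (by linarith)
      have hempty : ∑ z ∈ Aᶜ.filter (fun z => 0 < P z), P z * Real.log (P z / Q z) = 0 := by
        apply Finset.sum_eq_zero
        intro z hz
        rw [Finset.mem_filter] at hz
        have hz' : P z = 0 := by
          have := (Finset.sum_eq_zero_iff_of_nonneg (fun z _ => hP0 z)).mp
            (by rw [hPcsum, heq]) z hz.1
          exact this
        linarith [hz.2]
      rw [heq, hempty]
      simp
  -- combine
  have hPApos : 0 < PA := hA
  have hlogdiv : Real.log (PA / QA) = Real.log PA - Real.log QA :=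
    Real.log_div (ne_of_gt hPApos) (ne_of_gt hQApos)
  have hkey : -(PA * Real.log QA) ≤ D + H2 PA := by
    rw [hH2 PA, hDsplit]
    have := hApart
    rw [hlogdiv] at this
    nlinarith [hAcpart]
  rw [ge_iff_le, neg_le, le_div_iff₀ hPApos]
  nlinarith [hkey]
end

section
/- Let U and J be finite nonempty types, let w be a pmf on J, and for each j ∈ J let p_j and q_j be strictly positive pmfs on U. For λ ∈ [0,1] define Z_j(λ) = Σ_{u∈U} p_j(u)^{1−λ} q_j(u)^λ and the tilted pmf P_{λ,j}(u) = p_j(u)^{1−λ} q_j(u)^λ / Z_j(λ). Suppose λ° ∈ [0,1] satisfies Σ_{j∈J} w_j · D(P_{λ°,j} ‖ p_j) = Σ_{j∈J} w_j · D(P_{λ°,j} ‖ q_j). Then Σ_{j∈J} w_j · D(P_{λ°,j} ‖ p_j) = sup_{λ∈[0,1]} Σ_{j∈J} w_j · ( −log Z_j(λ) ). -/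
/-- at a balanced tilting parameter `λ°` (where the weighted KL
divergences of the tilted pmfs to `p` and to `q` agree), the common weighted KL
divergence equals the maximum over `λ ∈ [0,1]` of the weighted Chernoff
divergence `∑ j, w j · (−log Z_j(λ))`. -/
theorem stmt7 {U J : Type*} [Fintype U] [Fintype J] [Nonempty U] [Nonempty J]
    (w : J → ℝ) (hw0 : ∀ j, 0 ≤ w j) (hw1 : ∑ j, w j = 1)
    (p q : J → U → ℝ)
    (hp0 : ∀ j u, 0 < p j u) (hp1 : ∀ j, ∑ u, p j u = 1)
    (hq0 : ∀ j u, 0 < q j u) (hq1 : ∀ j, ∑ u, q j u = 1)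
    (Z : J → ℝ → ℝ)
    (hZ : ∀ j lam, Z j lam = ∑ u, p j u ^ (1 - lam) * q j u ^ lam)
    (P : J → ℝ → U → ℝ)
    (hP : ∀ j lam u, P j lam u = p j u ^ (1 - lam) * q j u ^ lam / Z j lam)
    (lam0 : ℝ) (hlam0 : lam0 ∈ Set.Icc (0 : ℝ) 1)
    (hbal : (∑ j, w j * ∑ u, P j lam0 u * Real.log (P j lam0 u / p j u)) =
            ∑ j, w j * ∑ u, P j lam0 u * Real.log (P j lam0 u / q j u)) :
    (∑ j, w j * ∑ u, P j lam0 u * Real.log (P j lam0 u / p j u)) =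
      ⨆ lam : Set.Icc (0 : ℝ) 1, ∑ j, w j * -Real.log (Z j (lam : ℝ)) := by
  classical
  have hZpos : ∀ j lam, 0 < Z j lam := by
    intro j lam
    rw [hZ]
    refine Finset.sum_pos (fun u _ => ?_) Finset.univ_nonempty
    have h1 := hp0 j u; have h2 := hq0 j u; positivity
  have hPpos : ∀ j lam u, 0 < P j lam u := by
    intro j lam u
    rw [hP]
    have h1 := hp0 j u; have h2 := hq0 j u
    exact div_pos (by positivity) (hZpos j lam)
  have hPsum : ∀ j lam, ∑ u, P j lam u = 1 := by
    intro j lam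
    simp only [hP]
    rw [← Finset.sum_div, ← hZ, div_self (hZpos j lam).ne']
  have hlogP : ∀ j lam u, Real.log (P j lam u) =
      (1 - lam) * Real.log (p j u) + lam * Real.log (q j u) - Real.log (Z j lam) := by
    intro j lam u
    have h1 := hp0 j u; have h2 := hq0 j u
    rw [hP, Real.log_div (by positivity) (hZpos j lam).ne',
      Real.log_mul (by positivity) (by positivity),
      Real.log_rpow (hp0 j u), Real.log_rpow (hq0 j u)]
  -- A j: the expected log-likelihood ratio under the tilted pmf at lam0
  have hDp : ∀ j, (∑ u, P j lam0 u * Real.log (P j lam0 u / p j u)) =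
      lam0 * (∑ u, P j lam0 u * (Real.log (q j u) - Real.log (p j u)))
        - Real.log (Z j lam0) := by
    intro j
    have h : ∀ u : U, P j lam0 u * Real.log (P j lam0 u / p j u) =
        lam0 * (P j lam0 u * (Real.log (q j u) - Real.log (p j u)))
          - P j lam0 u * Real.log (Z j lam0) := by
      intro u
      rw [Real.log_div (hPpos j lam0 u).ne' (hp0 j u).ne', hlogP]
      ring
    rw [Finset.sum_congr rfl (fun u _ => h u), Finset.sum_sub_distrib,
      ← Finset.mul_sum, ← Finset.sum_mul, hPsum, one_mul]
  have hDq : ∀ j, (∑ u, P j lam0 u * Real.log (P j lam0 u / q j u)) =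
      (lam0 - 1) * (∑ u, P j lam0 u * (Real.log (q j u) - Real.log (p j u)))
        - Real.log (Z j lam0) := by
    intro j
    have h : ∀ u : U, P j lam0 u * Real.log (P j lam0 u / q j u) =
        (lam0 - 1) * (P j lam0 u * (Real.log (q j u) - Real.log (p j u)))
          - P j lam0 u * Real.log (Z j lam0) := by
      intro u
      rw [Real.log_div (hPpos j lam0 u).ne' (hq0 j u).ne', hlogP]
      ring
    rw [Finset.sum_congr rfl (fun u _ => h u), Finset.sum_sub_distrib,
      ← Finset.mul_sum, ← Finset.sum_mul, hPsum, one_mul]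
  -- the balance condition forces the weighted mean of A to vanish
  have hbalA : ∑ j, w j *
      (∑ u, P j lam0 u * (Real.log (q j u) - Real.log (p j u))) = 0 := by
    have h : ∑ j, w j * (∑ u, P j lam0 u * (Real.log (q j u) - Real.log (p j u))) =
        (∑ j, w j * ∑ u, P j lam0 u * Real.log (P j lam0 u / p j u)) -
        (∑ j, w j * ∑ u, P j lam0 u * Real.log (P j lam0 u / q j u)) := by
      rw [← Finset.sum_sub_distrib]
      refine Finset.sum_congr rfl fun j _ => ?_
      rw [hDp j, hDq j]; ring
    rw [h, hbal, sub_self]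
  -- the common value K equals F(lam0)
  have hK : (∑ j, w j * ∑ u, P j lam0 u * Real.log (P j lam0 u / p j u)) =
      ∑ j, w j * -Real.log (Z j lam0) := by
    have h : ∀ j : J, w j * (∑ u, P j lam0 u * Real.log (P j lam0 u / p j u)) =
        lam0 * (w j * (∑ u, P j lam0 u * (Real.log (q j u) - Real.log (p j u))))
          + w j * -Real.log (Z j lam0) := by
      intro j; rw [hDp j]; ring
    rw [Finset.sum_congr rfl (fun j _ => h j), Finset.sum_add_distrib,
      ← Finset.mul_sum, hbalA, mul_zero, zero_add]
  have hKq : (∑ j, w j * ∑ u, P j lam0 u * Real.log (P j lam0 u / q j u)) =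
      ∑ j, w j * -Real.log (Z j lam0) := hbal ▸ hK
  -- Gibbs variational bound: -log Z_j(lam) ≤ (1-lam) D(R‖p) + lam D(R‖q)
  have hGibbs : ∀ (j : J), ∀ lam ∈ Set.Icc (0 : ℝ) 1,
      -Real.log (Z j lam) ≤
        (1 - lam) * (∑ u, P j lam0 u * Real.log (P j lam0 u / p j u))
          + lam * (∑ u, P j lam0 u * Real.log (P j lam0 u / q j u)) := by
    intro j lam hlam
    obtain ⟨hl0, hl1⟩ := hlam
    -- key: ∑ R log(S/R) ≤ log ∑ S
    have key : ∑ u, P j lam0 u *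
        Real.log (p j u ^ (1 - lam) * q j u ^ lam / P j lam0 u) ≤
        Real.log (Z j lam) := by
      have hterm : ∀ u : U, P j lam0 u *
          Real.log (p j u ^ (1 - lam) * q j u ^ lam / P j lam0 u)
            - P j lam0 u * Real.log (Z j lam)
          ≤ p j u ^ (1 - lam) * q j u ^ lam / Z j lam - P j lam0 u := by
        intro u
        have h1 := hp0 j u; have h2 := hq0 j u
        have h3 := hPpos j lam0 u; have h4 := hZpos j lam
        have hx : (0:ℝ) < p j u ^ (1 - lam) * q j u ^ lam / (P j lam0 u * Z j lam) := by
          positivity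
        have hlog := Real.log_le_sub_one_of_pos hx
        have hR := (hPpos j lam0 u)
        have hmul := mul_le_mul_of_nonneg_left hlog hR.le
        calc P j lam0 u * Real.log (p j u ^ (1 - lam) * q j u ^ lam / P j lam0 u)
              - P j lam0 u * Real.log (Z j lam)
            = P j lam0 u *
              Real.log (p j u ^ (1 - lam) * q j u ^ lam / (P j lam0 u * Z j lam)) := by
              rw [show p j u ^ (1 - lam) * q j u ^ lam / (P j lam0 u * Z j lam)
                  = (p j u ^ (1 - lam) * q j u ^ lam / P j lam0 u) / Z j lam by ring,
                Real.log_div (by positivity) h4.ne']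
              ring
          _ ≤ P j lam0 u *
              (p j u ^ (1 - lam) * q j u ^ lam / (P j lam0 u * Z j lam) - 1) := hmul
          _ = p j u ^ (1 - lam) * q j u ^ lam / Z j lam - P j lam0 u := by
              field_simp
      have hsum := Finset.sum_le_sum (fun u (_ : u ∈ Finset.univ) => hterm u)
      rw [Finset.sum_sub_distrib, Finset.sum_sub_distrib, ← Finset.sum_mul, hPsum,
        one_mul, ← Finset.sum_div, ← hZ, div_self (hZpos j lam).ne'] at hsum
      linarith
    -- rewrite the left side of key
    have hexp : ∑ u, P j lam0 u *
        Real.log (p j u ^ (1 - lam) * q j u ^ lam / P j lam0 u) =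
        -((1 - lam) * (∑ u, P j lam0 u * Real.log (P j lam0 u / p j u))
          + lam * (∑ u, P j lam0 u * Real.log (P j lam0 u / q j u))) := by
      have h : ∀ u : U, P j lam0 u *
          Real.log (p j u ^ (1 - lam) * q j u ^ lam / P j lam0 u) =
          -((1 - lam) * (P j lam0 u * Real.log (P j lam0 u / p j u))
            + lam * (P j lam0 u * Real.log (P j lam0 u / q j u))) := by
        intro u
        have h1 := hp0 j u; have h2 := hq0 j u
        rw [Real.log_div (by positivity) (hPpos j lam0 u).ne',
          Real.log_mul (by positivity) (by positivity),
          Real.log_rpow (hp0 j u), Real.log_rpow (hq0 j u),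
          Real.log_div (hPpos j lam0 u).ne' (hp0 j u).ne',
          Real.log_div (hPpos j lam0 u).ne' (hq0 j u).ne']
        ring
      rw [Finset.sum_congr rfl (fun u _ => h u), Finset.sum_neg_distrib,
        Finset.sum_add_distrib, ← Finset.mul_sum, ← Finset.mul_sum]
    rw [hexp] at key
    linarith
  -- upper bound on F(lam) for all lam in [0,1]
  have hF : ∀ lam ∈ Set.Icc (0 : ℝ) 1,
      (∑ j, w j * -Real.log (Z j lam)) ≤ ∑ j, w j * -Real.log (Z j lam0) := by
    intro lam hlam
    calc ∑ j, w j * -Real.log (Z j lam)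
        ≤ ∑ j, w j * ((1 - lam) * (∑ u, P j lam0 u * Real.log (P j lam0 u / p j u))
            + lam * (∑ u, P j lam0 u * Real.log (P j lam0 u / q j u))) :=
          Finset.sum_le_sum fun j _ =>
            mul_le_mul_of_nonneg_left (hGibbs j lam hlam) (hw0 j)
      _ = (1 - lam) * (∑ j, w j * ∑ u, P j lam0 u * Real.log (P j lam0 u / p j u))
            + lam * (∑ j, w j * ∑ u, P j lam0 u * Real.log (P j lam0 u / q j u)) := by
          rw [Finset.mul_sum, Finset.mul_sum, ← Finset.sum_add_distrib]
          exact Finset.sum_congr rfl fun j _ => by ring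
      _ = ∑ j, w j * -Real.log (Z j lam0) := by
          rw [hK, hKq]; ring
  rw [hK]
  refine le_antisymm ?_ (ciSup_le fun lam => hF lam lam.2)
  have hbdd : BddAbove (Set.range fun lam : Set.Icc (0 : ℝ) 1 =>
      ∑ j, w j * -Real.log (Z j (lam : ℝ))) := by
    refine ⟨∑ j, w j * -Real.log (Z j lam0), ?_⟩
    rintro x ⟨lam, rfl⟩
    exact hF lam lam.2
  exact le_ciSup hbdd (⟨lam0, hlam0⟩ : Set.Icc (0 : ℝ) 1)
end

section
/- Let U be a finite nonempty type and let p, q be strictly positive pmfs on U. Define Z(λ) = Σ_{u∈U} p(u)^{1−λ} q(u)^λ and the tilted pmf P_λ(u) = p(u)^{1−λ} q(u)^λ / Z(λ). Then for every λ ∈ ℝ, the function g(λ) = −log Z(λ) is differentiable at λ with derivative g′(λ) = D(P_λ ‖ q) − D(P_λ ‖ p). -/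
/-!
`Z` is a finite sum of exponentials `exp ((1 - λ) log p(u) + λ log q(u))`, so `-Z'/Z` is the
`P_λ`-average of `log p - log q`. Expanding `log (P_λ/q) - log (P_λ/p)` termwise gives the
same average, the `log P_λ` terms cancelling.
-/

open Real Finset

namespace Chernoff

variable {U : Type*} [Fintype U]

noncomputable def tiltPartition (p q : U → ℝ) (l : ℝ) : ℝ :=
  ∑ u, p u ^ (1 - l) * q u ^ l

noncomputable def tilted (p q : U → ℝ) (l : ℝ) (u : U) : ℝ :=
  p u ^ (1 - l) * q u ^ l / tiltPartition p q l

lemma rpow_one_sub_mul_rpow_pos {a b : ℝ} (ha : 0 < a) (hb : 0 < b) (l : ℝ) :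
    0 < a ^ (1 - l) * b ^ l :=
  mul_pos (rpow_pos_of_pos ha _) (rpow_pos_of_pos hb _)

lemma hasDerivAt_rpow_one_sub_mul_rpow {a b : ℝ} (ha : 0 < a) (hb : 0 < b) (x : ℝ) :
    HasDerivAt (fun l => a ^ (1 - l) * b ^ l) (a ^ (1 - x) * b ^ x * (log b - log a)) x := by
  have hA : HasDerivAt (fun l => a ^ (1 - l)) (log a * (-1) * a ^ (1 - x)) x :=
    ((hasDerivAt_id x).const_sub 1).const_rpow ha
  have hB : HasDerivAt (fun l => b ^ l) (log b * 1 * b ^ x) x :=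
    (hasDerivAt_id x).const_rpow hb
  exact (hA.mul hB).congr_deriv (by ring)

variable {p q : U → ℝ}

lemma tiltPartition_pos [Nonempty U] (hp : ∀ u, 0 < p u) (hq : ∀ u, 0 < q u) (l : ℝ) :
    0 < tiltPartition p q l :=
  sum_pos (fun u _ => rpow_one_sub_mul_rpow_pos (hp u) (hq u) l) univ_nonempty

lemma tilted_pos [Nonempty U] (hp : ∀ u, 0 < p u) (hq : ∀ u, 0 < q u) (l : ℝ) (u : U) :
    0 < tilted p q l u :=
  div_pos (rpow_one_sub_mul_rpow_pos (hp u) (hq u) l) (tiltPartition_pos hp hq l)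

lemma hasDerivAt_tiltPartition (hp : ∀ u, 0 < p u) (hq : ∀ u, 0 < q u) (x : ℝ) :
    HasDerivAt (tiltPartition p q)
      (∑ u, p u ^ (1 - x) * q u ^ x * (log (q u) - log (p u))) x :=
  HasDerivAt.fun_sum fun u _ => hasDerivAt_rpow_one_sub_mul_rpow (hp u) (hq u) x

lemma hasDerivAt_neg_log_tiltPartition [Nonempty U] (hp : ∀ u, 0 < p u) (hq : ∀ u, 0 < q u)
    (x : ℝ) :
    HasDerivAt (fun l => -log (tiltPartition p q l))
      (∑ u, tilted p q x u * (log (p u) - log (q u))) x := by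
  have hZ := tiltPartition_pos hp hq x
  refine ((hasDerivAt_tiltPartition hp hq x).log hZ.ne').neg.congr_deriv ?_
  rw [← neg_div, ← sum_neg_distrib, sum_div]
  refine sum_congr rfl fun u _ => ?_
  rw [tilted]
  field_simp
  ring

end Chernoff

lemma Finset.sum_mul_log_div_sub_sum_mul_log_div {ι : Type*} (s : Finset ι) {P p q : ι → ℝ}
    (hP : ∀ i ∈ s, P i ≠ 0) (hp : ∀ i ∈ s, p i ≠ 0) (hq : ∀ i ∈ s, q i ≠ 0) :
    ∑ i ∈ s, P i * log (P i / q i) - ∑ i ∈ s, P i * log (P i / p i)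
      = ∑ i ∈ s, P i * (log (p i) - log (q i)) := by
  rw [← sum_sub_distrib]
  refine sum_congr rfl fun i hi => ?_
  rw [log_div (hP i hi) (hq i hi), log_div (hP i hi) (hp i hi)]
  ring

open Chernoff

theorem stmt8_general {U : Type*} [Fintype U] [Nonempty U]
    (p q : U → ℝ)
    (hp0 : ∀ u, 0 < p u)
    (hq0 : ∀ u, 0 < q u)
    (Z : ℝ → ℝ)
    (hZ : ∀ lam, Z lam = ∑ u, p u ^ (1 - lam) * q u ^ lam)
    (P : ℝ → U → ℝ)
    (hP : ∀ lam u, P lam u = p u ^ (1 - lam) * q u ^ lam / Z lam)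
    (lam : ℝ) :
    HasDerivAt (fun l => -Real.log (Z l))
      ((∑ u, P lam u * Real.log (P lam u / q u)) -
        ∑ u, P lam u * Real.log (P lam u / p u)) lam := by
  obtain rfl : Z = tiltPartition p q := funext hZ
  obtain rfl : P = tilted p q := funext₂ hP
  rw [sum_mul_log_div_sub_sum_mul_log_div univ (fun u _ => (tilted_pos hp0 hq0 lam u).ne')
    (fun u _ => (hp0 u).ne') (fun u _ => (hq0 u).ne')]
  exact hasDerivAt_neg_log_tiltPartition hp0 hq0 lam

/-- the Chernoff divergence `g(λ) = −log Z(λ)` with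
`Z(λ) = ∑ u, p(u)^(1−λ) q(u)^λ` is differentiable everywhere, with derivative
`g′(λ) = D(P_λ‖q) − D(P_λ‖p)` where `P_λ` is the tilted pmf. -/
theorem stmt8 {U : Type*} [Fintype U] [Nonempty U]
    (p q : U → ℝ)
    (hp0 : ∀ u, 0 < p u) (hp1 : ∑ u, p u = 1)
    (hq0 : ∀ u, 0 < q u) (hq1 : ∑ u, q u = 1)
    (Z : ℝ → ℝ)
    (hZ : ∀ lam, Z lam = ∑ u, p u ^ (1 - lam) * q u ^ lam)
    (P : ℝ → U → ℝ)
    (hP : ∀ lam u, P lam u = p u ^ (1 - lam) * q u ^ lam / Z lam)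
    (lam : ℝ) :
    HasDerivAt (fun l => -Real.log (Z l))
      ((∑ u, P lam u * Real.log (P lam u / q u)) -
        ∑ u, P lam u * Real.log (P lam u / p u)) lam :=
  stmt8_general p q hp0 hq0 Z hZ P hP lam
end

section
/- Let 𝒳, 𝒮, 𝒴, 𝒰 be finite nonempty types and L a positive integer. Let p be a pmf on 𝒳 × 𝒮; for each (x,s) let W(·|x,s) be a pmf on 𝒴; for each ℓ ∈ {1,…,L} and each y ∈ 𝒴 let V_ℓ(·|y) be a pmf on 𝒰. Consider the joint pmf on 𝒳 × 𝒮 × 𝒴^L × 𝒰^L given by q(x,s,y,u) = p(x,s) · Π_{ℓ=1}^L W(y_ℓ|x,s) · Π_{ℓ=1}^L V_ℓ(u_ℓ|y_ℓ). Then for every subset 𝓛 ⊆ {1,…,L}, the conditional mutual informations induced by q satisfy I( U_𝓛 ; Y_{\{1,…,L\}} | U_{𝓛ᶜ}, S ) = Σ_{ℓ∈𝓛} I( U_ℓ ; Y_ℓ | X, S ) + I( U_𝓛 ; X | U_{𝓛ᶜ}, S ), where U_𝓛 denotes the tuple (U_ℓ)_{ℓ∈𝓛} and 𝓛ᶜ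 = {1,…,L} ∖ 𝓛. -/
open scoped Classical

/-- Probability of an event under a finitely supported distribution. -/
noncomputable def prOf {Ω : Type*} [Fintype Ω] (q : Ω → ℝ) (s : Set Ω) : ℝ :=
  ∑ ω, if ω ∈ s then q ω else 0

/-- Conditional mutual information `I(f(ω); g(ω) | h(ω))` of the random
variables `f`, `g`, `h` under the joint pmf `q` on the finite sample space `Ω`:
`∑_{a,b,c} q(a,b,c) log( q(a,b,c) q_C(c) / (q_{AC}(a,c) q_{BC}(b,c)) )`,
written as a sum over `ω` (terms with `q ω = 0` contribute `0`). -/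
noncomputable def condMI {Ω A B C : Type*} [Fintype Ω]
    (q : Ω → ℝ) (f : Ω → A) (g : Ω → B) (h : Ω → C) : ℝ :=
  ∑ ω, q ω * Real.log
    ((prOf q {ω' | f ω' = f ω ∧ g ω' = g ω ∧ h ω' = h ω} *
        prOf q {ω' | h ω' = h ω}) /
      (prOf q {ω' | f ω' = f ω ∧ h ω' = h ω} *
        prOf q {ω' | g ω' = g ω ∧ h ω' = h ω}))

/-! Since `condMI q f g h` is the average over `q` of `log (P(f | g, h) / P(f | h))`, it suffices to
prove the identity between these log-ratios at every point of the support of `q`. There the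
conditional probabilities are explicit, because each `U_ℓ` is produced from `Y_ℓ` alone and each
`Y_ℓ` from `(X, S)` alone: with `φ_ℓ(u | x, s) = ∑ₜ W(t | x, s) V_ℓ(u | t)`,
`P(U_𝓛 | Y, U_𝓛ᶜ, S) = ∏_{ℓ ∈ 𝓛} V_ℓ(u_ℓ | y_ℓ)`, `P(U_𝓛 | X, U_𝓛ᶜ, S) = ∏_{ℓ ∈ 𝓛} φ_ℓ(u_ℓ | x, s)`,
`P(U_ℓ | Y_ℓ, X, S) = V_ℓ(u_ℓ | y_ℓ)` and `P(U_ℓ | X, S) = φ_ℓ(u_ℓ | x, s)`. The common factor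
`P(U_𝓛 | U_𝓛ᶜ, S)` cancels and the identity becomes `log ∏ V = ∑ log (V / φ) + log ∏ φ`. -/

open Finset Real

theorem sum_ite_forall_eq_prod {ι β R : Type*} [Fintype ι] [DecidableEq ι] [Fintype β]
    [DecidableEq β] [CommSemiring R] (T : Finset ι) (c : ι → β) (f : ι → β → R) :
    ∑ g : ι → β, (if ∀ i ∈ T, g i = c i then ∏ i, f i (g i) else 0) =
      ∏ i, if i ∈ T then f i (c i) else ∑ b, f i b := by
  have hfilter : ({g : ι → β | ∀ i ∈ T, g i = c i} : Finset (ι → β)) =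
      Fintype.piFinset fun i => if i ∈ T then {c i} else univ := by
    ext g
    simp only [mem_filter, mem_univ, true_and, Fintype.mem_piFinset]
    refine forall_congr' fun i => ?_
    split_ifs <;> simp_all
  rw [← sum_filter, hfilter, ← prod_univ_sum]
  refine prod_congr rfl fun i _ => ?_
  split_ifs <;> simp

theorem forall_and_forall_not_iff {α : Type*} (Q P : α → Prop) :
    ((∀ a, Q a → P a) ∧ ∀ a, ¬Q a → P a) ↔ ∀ a, P a := by
  simp only [← forall_and, Classical.imp_and_neg_imp_iff]

theorem log_prod_div_eq_sum_log_div_add {ι : Type*} (T : Finset ι) {a b : ι → ℝ} {c : ℝ}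
    (ha : ∀ i ∈ T, a i ≠ 0) (hb : ∀ i ∈ T, b i ≠ 0) (hc : c ≠ 0) :
    log ((∏ i ∈ T, a i) / c) = ∑ i ∈ T, log (a i / b i) + log ((∏ i ∈ T, b i) / c) := by
  rw [log_div (prod_ne_zero_iff.2 ha) hc, log_div (prod_ne_zero_iff.2 hb) hc, log_prod ha,
    log_prod hb, sum_congr rfl fun i hi => log_div (ha i hi) (hb i hi), sum_sub_distrib]
  ring

theorem le_prOf_of_mem {Ω : Type*} [Fintype Ω] {q : Ω → ℝ} (hq : ∀ ω, 0 ≤ q ω) {s : Set Ω}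
    {ω : Ω} (hω : ω ∈ s) : q ω ≤ prOf q s := by
  have hterm : ∀ ω', 0 ≤ if ω' ∈ s then q ω' else 0 := fun ω' => by
    split_ifs
    exacts [hq ω', le_rfl]
  simpa [prOf, hω] using single_le_sum (fun ω' _ => hterm ω') (mem_univ ω)

-- Junk value `0` when the conditioning event `{g = g ω}` is null.
noncomputable def condProb {Ω A C : Type*} [Fintype Ω] (q : Ω → ℝ) (f : Ω → A) (g : Ω → C)
    (ω : Ω) : ℝ :=
  prOf q {ω' | f ω' = f ω ∧ g ω' = g ω} / prOf q {ω' | g ω' = g ω}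

theorem condProb_pos {Ω A C : Type*} [Fintype Ω] {q : Ω → ℝ} (hq : ∀ ω, 0 ≤ q ω)
    (f : Ω → A) (g : Ω → C) {ω : Ω} (hω : 0 < q ω) : 0 < condProb q f g ω :=
  div_pos (hω.trans_le (le_prOf_of_mem hq ⟨rfl, rfl⟩)) (hω.trans_le (le_prOf_of_mem hq rfl))

theorem condProb_eq_of_prOf_eq_mul {Ω A C : Type*} [Fintype Ω] {q : Ω → ℝ}
    (hq : ∀ ω, 0 ≤ q ω) {f : Ω → A} {g : Ω → C} {ω : Ω} (hω : 0 < q ω) {s t : Set Ω} {c : ℝ}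
    (hs : {ω' | f ω' = f ω ∧ g ω' = g ω} = s) (ht : {ω' | g ω' = g ω} = t)
    (h : prOf q s = c * prOf q t) : condProb q f g ω = c := by
  have hpos : 0 < prOf q t := ht ▸ hω.trans_le (le_prOf_of_mem hq rfl)
  rw [condProb, hs, ht, h, mul_div_cancel_right₀ _ hpos.ne']

theorem condMI_eq_sum_log_condProb {Ω A B C : Type*} [Fintype Ω] (q : Ω → ℝ) (f : Ω → A)
    (g : Ω → B) (h : Ω → C) :
    condMI q f g h =
      ∑ ω, q ω * log (condProb q f (fun ω => (g ω, h ω)) ω / condProb q f h ω) := by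
  unfold condMI
  refine sum_congr rfl fun ω _ => ?_
  simp only [condProb, Prod.mk.injEq, div_div_div_eq,
    mul_comm (prOf q {ω' | g ω' = g ω ∧ h ω' = h ω})]

theorem sum_mul_eq_sum_add_of_ne_zero {Ω ι : Type*} [Fintype Ω] (q a c : Ω → ℝ) (b : ι → Ω → ℝ)
    (T : Finset ι) (h : ∀ ω, q ω ≠ 0 → a ω = ∑ i ∈ T, b i ω + c ω) :
    ∑ ω, q ω * a ω = ∑ i ∈ T, ∑ ω, q ω * b i ω + ∑ ω, q ω * c ω := by
  rw [sum_comm, ← sum_add_distrib]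
  refine sum_congr rfl fun ω _ => ?_
  rw [← mul_sum, ← mul_add]
  by_cases hω : q ω = 0
  · simp [hω]
  · rw [h ω hω]

section Model

variable {X S Y U ι : Type*} [Fintype X] [Fintype S] [Fintype Y] [Fintype U] [Fintype ι]
  [DecidableEq ι] {p : X × S → ℝ} {W : X → S → Y → ℝ} {V : ι → Y → U → ℝ}
  {q : X × S × (ι → Y) × (ι → U) → ℝ}
  (hq : ∀ x s y u, q (x, s, y, u) = p (x, s) * (∏ ℓ, W x s (y ℓ)) * ∏ ℓ, V ℓ (y ℓ) (u ℓ))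
  (hW1 : ∀ x s, ∑ y, W x s y = 1) (hV1 : ∀ ℓ y, ∑ u, V ℓ y u = 1)

def cylinder (E : Finset X) (s : S) (TY : Finset ι) (y : ι → Y) (TU : Finset ι) (u : ι → U) :
    Set (X × S × (ι → Y) × (ι → U)) :=
  {ω | ω.1 ∈ E ∧ ω.2.1 = s ∧ (∀ ℓ ∈ TY, ω.2.2.1 ℓ = y ℓ) ∧ ∀ ℓ ∈ TU, ω.2.2.2 ℓ = u ℓ}

include hq hV1 in
theorem prOf_cylinder (E : Finset X) (s : S) (TY : Finset ι) (y : ι → Y) (TU : Finset ι) (u : ι → U) :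
    prOf q (cylinder E s TY y TU u) = ∑ x ∈ E, p (x, s) * ∏ ℓ,
      if ℓ ∈ TY then W x s (y ℓ) * (if ℓ ∈ TU then V ℓ (y ℓ) (u ℓ) else 1)
      else ∑ t, W x s t * (if ℓ ∈ TU then V ℓ t (u ℓ) else 1) := by
  simp only [prOf, cylinder, Fintype.sum_prod_type, Set.mem_ofPred_eq, hq, ite_and,
    sum_ite_irrel, sum_const_zero, Fintype.sum_ite_eq', mul_assoc]
  rw [Fintype.sum_ite_mem]
  refine sum_congr rfl fun x _ => ?_
  have hU : ∀ y' : ι → Y, (∑ u' : ι → U, if ∀ ℓ ∈ TU, u' ℓ = u ℓ then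
      p (x, s) * ((∏ ℓ, W x s (y' ℓ)) * ∏ ℓ, V ℓ (y' ℓ) (u' ℓ)) else 0) =
      p (x, s) * ∏ ℓ, W x s (y' ℓ) * if ℓ ∈ TU then V ℓ (y' ℓ) (u ℓ) else 1 := fun y' => by
    simp_rw [← mul_ite_zero, ← mul_sum, sum_ite_forall_eq_prod TU u fun ℓ => V ℓ (y' ℓ),
      prod_mul_distrib, hV1]
  simp_rw [hU, ← mul_ite_zero, ← mul_sum,
    sum_ite_forall_eq_prod TY y fun ℓ t => W x s t * if ℓ ∈ TU then V ℓ t (u ℓ) else 1]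

include hq hW1 hV1

theorem prOf_cylinder_of_subset (E : Finset X) (s : S) {TY TU : Finset ι} (hT : TU ⊆ TY) (y : ι → Y) (u : ι → U) :
    prOf q (cylinder E s TY y TU u) =
      (∑ x ∈ E, p (x, s) * ∏ ℓ ∈ TY, W x s (y ℓ)) * ∏ ℓ ∈ TU, V ℓ (y ℓ) (u ℓ) := by
  rw [prOf_cylinder hq hV1, sum_mul]
  refine sum_congr rfl fun x _ => ?_
  have hfactor : ∀ ℓ, (if ℓ ∈ TY then W x s (y ℓ) * (if ℓ ∈ TU then V ℓ (y ℓ) (u ℓ) else 1)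
      else ∑ t, W x s t * (if ℓ ∈ TU then V ℓ t (u ℓ) else 1)) =
      (if ℓ ∈ TY then W x s (y ℓ) else 1) * (if ℓ ∈ TU then V ℓ (y ℓ) (u ℓ) else 1) := by
    intro ℓ
    by_cases hY : ℓ ∈ TY
    · simp [hY]
    · have hU : ℓ ∉ TU := fun h => hY (hT h)
      simp [hY, hU, hW1]
  simp_rw [hfactor, prod_mul_distrib, Fintype.prod_ite_mem, mul_assoc]

theorem prOf_cylinder_empty (E : Finset X) (s : S) (y : ι → Y) (TU : Finset ι) (u : ι → U) :
    prOf q (cylinder E s ∅ y TU u) =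
      ∑ x ∈ E, p (x, s) * ∏ ℓ ∈ TU, ∑ t, W x s t * V ℓ t (u ℓ) := by
  rw [prOf_cylinder hq hV1]
  refine sum_congr rfl fun x _ => ?_
  rw [← Fintype.prod_ite_mem TU]
  congr 1
  refine Fintype.prod_congr _ _ fun ℓ => ?_
  split_ifs <;> simp_all

section Channel

variable (hq0 : ∀ ω, 0 ≤ q ω) {x : X} {s : S} {y : ι → Y} {u : ι → U} (hω : 0 < q (x, s, y, u))
include hq0 hω

theorem condProb_restrict_given_outputs (𝓛 : Finset ι) :
    condProb q (fun ω (ℓ : {ℓ // ℓ ∈ 𝓛}) => ω.2.2.2 ℓ.1)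
      (fun ω => (ω.2.2.1, (fun ℓ : {ℓ // ℓ ∉ 𝓛} => ω.2.2.2 ℓ.1), ω.2.1)) (x, s, y, u) =
      ∏ ℓ ∈ 𝓛, V ℓ (y ℓ) (u ℓ) := by
  refine condProb_eq_of_prOf_eq_mul hq0 hω (s := cylinder univ s univ y univ u)
    (t := cylinder univ s univ y 𝓛ᶜ u) ?_ ?_ ?_
  · ext ⟨x', s', y', u'⟩
    have := forall_and_forall_not_iff (· ∈ 𝓛) fun ℓ => u' ℓ = u ℓ
    simp only [cylinder, Set.mem_ofPred_eq, funext_iff, Prod.mk.injEq, Subtype.forall, mem_univ,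
      forall_const, true_and] at this ⊢
    tauto
  · ext ⟨x', s', y', u'⟩
    simp only [cylinder, Set.mem_ofPred_eq, funext_iff, Prod.mk.injEq, Subtype.forall, mem_univ,
      mem_compl, forall_const, true_and]
    tauto
  · rw [prOf_cylinder_of_subset hq hW1 hV1 _ _ subset_rfl,
      prOf_cylinder_of_subset hq hW1 hV1 _ _ (subset_univ _), ← prod_mul_prod_compl 𝓛]
    ring

theorem condProb_restrict_given_input (𝓛 : Finset ι) :
    condProb q (fun ω (ℓ : {ℓ // ℓ ∈ 𝓛}) => ω.2.2.2 ℓ.1)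
      (fun ω => (ω.1, (fun ℓ : {ℓ // ℓ ∉ 𝓛} => ω.2.2.2 ℓ.1), ω.2.1)) (x, s, y, u) =
      ∏ ℓ ∈ 𝓛, ∑ t, W x s t * V ℓ t (u ℓ) := by
  refine condProb_eq_of_prOf_eq_mul hq0 hω (s := cylinder {x} s ∅ y univ u)
    (t := cylinder {x} s ∅ y 𝓛ᶜ u) ?_ ?_ ?_
  · ext ⟨x', s', y', u'⟩
    have := forall_and_forall_not_iff (· ∈ 𝓛) fun ℓ => u' ℓ = u ℓ
    simp only [cylinder, Set.mem_ofPred_eq, funext_iff, Prod.mk.injEq, Subtype.forall, mem_univ,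
      mem_singleton, notMem_empty, forall_const] at this ⊢
    tauto
  · ext ⟨x', s', y', u'⟩
    simp only [cylinder, Set.mem_ofPred_eq, funext_iff, Prod.mk.injEq, Subtype.forall, mem_compl,
      mem_singleton, notMem_empty]
    tauto
  · rw [prOf_cylinder_empty hq hW1 hV1, prOf_cylinder_empty hq hW1 hV1, sum_singleton,
      sum_singleton, ← prod_mul_prod_compl 𝓛]
    ring

theorem condProb_coord_given_output (i : ι) :
    condProb q (fun ω => ω.2.2.2 i) (fun ω => (ω.2.2.1 i, ω.1, ω.2.1)) (x, s, y, u) =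
      V i (y i) (u i) := by
  refine condProb_eq_of_prOf_eq_mul hq0 hω (s := cylinder {x} s {i} y {i} u)
    (t := cylinder {x} s {i} y ∅ u) ?_ ?_ ?_
  · ext ⟨x', s', y', u'⟩
    simp only [cylinder, Set.mem_ofPred_eq, Prod.mk.injEq, mem_singleton, forall_eq]
    tauto
  · ext ⟨x', s', y', u'⟩
    simp only [cylinder, Set.mem_ofPred_eq, Prod.mk.injEq, mem_singleton, forall_eq,
      notMem_empty]
    tauto
  · rw [prOf_cylinder_of_subset hq hW1 hV1 _ _ subset_rfl,
      prOf_cylinder_of_subset hq hW1 hV1 _ _ (empty_subset _)]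
    simp [mul_comm]

theorem condProb_coord_given_input (i : ι) :
    condProb q (fun ω => ω.2.2.2 i) (fun ω => (ω.1, ω.2.1)) (x, s, y, u) =
      ∑ t, W x s t * V i t (u i) := by
  refine condProb_eq_of_prOf_eq_mul hq0 hω (s := cylinder {x} s ∅ y {i} u)
    (t := cylinder {x} s ∅ y ∅ u) ?_ ?_ ?_
  · ext ⟨x', s', y', u'⟩
    simp only [cylinder, Set.mem_ofPred_eq, Prod.mk.injEq, mem_singleton, forall_eq,
      notMem_empty]
    tauto
  · ext ⟨x', s', y', u'⟩
    simp only [cylinder, Set.mem_ofPred_eq, Prod.mk.injEq, mem_singleton, notMem_empty]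
    tauto
  · rw [prOf_cylinder_empty hq hW1 hV1, prOf_cylinder_empty hq hW1 hV1]
    simp [mul_comm]

end Channel

end Model

theorem stmt14_general {X S Y U : Type*} [Fintype X] [Fintype S] [Fintype Y] [Fintype U]
    (L : ℕ)
    (p : X × S → ℝ) (hp0 : ∀ z, 0 ≤ p z)
    (W : X → S → Y → ℝ) (hW0 : ∀ x s y, 0 ≤ W x s y) (hW1 : ∀ x s, ∑ y, W x s y = 1)
    (V : Fin L → Y → U → ℝ) (hV0 : ∀ ℓ y u, 0 ≤ V ℓ y u) (hV1 : ∀ ℓ y, ∑ u, V ℓ y u = 1)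
    (q : X × S × (Fin L → Y) × (Fin L → U) → ℝ)
    (hq : ∀ x s y u,
      q (x, s, y, u) = p (x, s) * (∏ ℓ, W x s (y ℓ)) * ∏ ℓ, V ℓ (y ℓ) (u ℓ))
    (𝓛 : Finset (Fin L)) :
    condMI q (fun ω => fun ℓ : {ℓ // ℓ ∈ 𝓛} => ω.2.2.2 ℓ.1)
        (fun ω => ω.2.2.1)
        (fun ω => ((fun ℓ : {ℓ // ℓ ∉ 𝓛} => ω.2.2.2 ℓ.1), ω.2.1)) =
      (∑ ℓ ∈ 𝓛, condMI q (fun ω => ω.2.2.2 ℓ) (fun ω => ω.2.2.1 ℓ)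
          (fun ω => (ω.1, ω.2.1))) +
        condMI q (fun ω => fun ℓ : {ℓ // ℓ ∈ 𝓛} => ω.2.2.2 ℓ.1)
          (fun ω => ω.1)
          (fun ω => ((fun ℓ : {ℓ // ℓ ∉ 𝓛} => ω.2.2.2 ℓ.1), ω.2.1)) := by
  have hq0 : ∀ ω, 0 ≤ q ω := fun ⟨x, s, y, u⟩ => by
    rw [hq]
    exact mul_nonneg (mul_nonneg (hp0 _) (prod_nonneg fun _ _ => hW0 ..))
      (prod_nonneg fun _ _ => hV0 ..)
  simp only [condMI_eq_sum_log_condProb]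
  refine sum_mul_eq_sum_add_of_ne_zero _ _ _ _ _ fun ⟨x, s, y, u⟩ hω => ?_
  replace hω := (hq0 _).lt_of_ne' hω
  have hV (ℓ : Fin L) : 0 < V ℓ (y ℓ) (u ℓ) :=
    condProb_coord_given_output hq hW1 hV1 hq0 hω ℓ ▸ condProb_pos hq0 _ _ hω
  have hφ (ℓ : Fin L) : 0 < ∑ t, W x s t * V ℓ t (u ℓ) :=
    condProb_coord_given_input hq hW1 hV1 hq0 hω ℓ ▸ condProb_pos hq0 _ _ hω
  rw [condProb_restrict_given_outputs hq hW1 hV1 hq0 hω,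
    condProb_restrict_given_input hq hW1 hV1 hq0 hω]
  simp only [condProb_coord_given_output hq hW1 hV1 hq0 hω,
    condProb_coord_given_input hq hW1 hV1 hq0 hω]
  exact log_prod_div_eq_sum_log_div_add 𝓛 (fun ℓ _ => (hV ℓ).ne') (fun ℓ _ => (hφ ℓ).ne')
    (condProb_pos hq0 _ _ hω).ne'

/-- for the CEO joint pmf
`q(x,s,y,u) = p(x,s) ∏ ℓ W(y_ℓ|x,s) ∏ ℓ V_ℓ(u_ℓ|y_ℓ)` and any set `𝓛` of
sensors, `I(U_𝓛; Y^L | U_{𝓛ᶜ}, S) = ∑_{ℓ∈𝓛} I(U_ℓ; Y_ℓ | X, S) +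
I(U_𝓛; X | U_{𝓛ᶜ}, S)`. -/
theorem stmt14 {X S Y U : Type*} [Fintype X] [Fintype S] [Fintype Y] [Fintype U]
    [Nonempty X] [Nonempty S] [Nonempty Y] [Nonempty U]
    (L : ℕ) (hL : 0 < L)
    (p : X × S → ℝ) (hp0 : ∀ z, 0 ≤ p z) (hp1 : ∑ z, p z = 1)
    (W : X → S → Y → ℝ) (hW0 : ∀ x s y, 0 ≤ W x s y) (hW1 : ∀ x s, ∑ y, W x s y = 1)
    (V : Fin L → Y → U → ℝ) (hV0 : ∀ ℓ y u, 0 ≤ V ℓ y u) (hV1 : ∀ ℓ y, ∑ u, V ℓ y u = 1)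
    (q : X × S × (Fin L → Y) × (Fin L → U) → ℝ)
    (hq : ∀ x s y u,
      q (x, s, y, u) = p (x, s) * (∏ ℓ, W x s (y ℓ)) * ∏ ℓ, V ℓ (y ℓ) (u ℓ))
    (𝓛 : Finset (Fin L)) :
    condMI q (fun ω => fun ℓ : {ℓ // ℓ ∈ 𝓛} => ω.2.2.2 ℓ.1)
        (fun ω => ω.2.2.1)
        (fun ω => ((fun ℓ : {ℓ // ℓ ∉ 𝓛} => ω.2.2.2 ℓ.1), ω.2.1)) =
      (∑ ℓ ∈ 𝓛, condMI q (fun ω => ω.2.2.2 ℓ) (fun ω => ω.2.2.1 ℓ)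
          (fun ω => (ω.1, ω.2.1))) +
        condMI q (fun ω => fun ℓ : {ℓ // ℓ ∈ 𝓛} => ω.2.2.2 ℓ.1)
          (fun ω => ω.1)
          (fun ω => ((fun ℓ : {ℓ // ℓ ∉ 𝓛} => ω.2.2.2 ℓ.1), ω.2.1)) :=
  stmt14_general L p hp0 W hW0 hW1 V hV0 hV1 q hq 𝓛
end
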